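/- arXiv:1903.08487 — 8 statements merged into one kernel-verified Lean document; each statement's English description precedes it below -/
import Mathlib

section
/- For every real ν with 0 < ν < 1, the integral ∫₀^∞ 1/(sinh x)^ν dx equals Γ(ν/2)·Γ(1/2 − ν/2)/(2√π). -/
open Real MeasureTheory

lemma beta_real_aux (a b : ℝ) (ha : 0 < a) (hb : 0 < b) :
    ∫ x in (0:ℝ)..1, x ^ (a - 1) * (1 - x) ^ (b - 1) =
      Real.Gamma a * Real.Gamma b / Real.Gamma (a + b) := by
  have h := Complex.Gamma_mul_Gamma_eq_betaIntegral (s := (a:ℂ)) (t := (b:ℂ))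
    (by simpa using ha) (by simpa using hb)
  have hcoe : Complex.betaIntegral a b =
      ((∫ x in (0:ℝ)..1, x ^ (a - 1) * (1 - x) ^ (b - 1) : ℝ) : ℂ) := by
    rw [Complex.betaIntegral, ← intervalIntegral.integral_ofReal]
    refine intervalIntegral.integral_congr fun x hx => ?_
    rw [Set.uIcc_of_le zero_le_one] at hx
    push_cast
    rw [Complex.ofReal_cpow hx.1, Complex.ofReal_cpow (by linarith [hx.2] : (0:ℝ) ≤ 1 - x)]
    push_cast
    ring
  rw [hcoe, ← Complex.ofReal_add, Complex.Gamma_ofReal, Complex.Gamma_ofReal,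
    Complex.Gamma_ofReal, ← Complex.ofReal_mul, ← Complex.ofReal_mul] at h
  have h' : Real.Gamma a * Real.Gamma b =
      Real.Gamma (a + b) * ∫ x in (0:ℝ)..1, x ^ (a - 1) * (1 - x) ^ (b - 1) := by
    exact_mod_cast h
  have hG : Real.Gamma (a + b) ≠ 0 := (Real.Gamma_pos_of_pos (by linarith)).ne'
  rw [eq_div_iff hG, h']
  ring

theorem stmt_1 (ν : ℝ) (hν0 : 0 < ν) (hν1 : ν < 1) :
    ∫ x in Set.Ioi (0:ℝ), 1 / Real.sinh x ^ ν =
      Real.Gamma (ν / 2) * Real.Gamma (1 / 2 - ν / 2) / (2 * Real.sqrt Real.pi) := by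
  set G : ℝ → ℝ := fun u => (2:ℝ) ^ (ν - 1) * (u ^ (ν / 2 - 1) * (1 - u) ^ (-ν)) with hGdef
  set f : ℝ → ℝ := fun x => Real.exp (-2 * x) with hf
  have himg : f '' Set.Ioi 0 = Set.Ioo 0 1 := by
    ext u
    constructor
    · rintro ⟨x, hx, rfl⟩
      simp only [Set.mem_Ioi] at hx
      exact ⟨Real.exp_pos _, Real.exp_lt_one_iff.mpr (by linarith)⟩
    · rintro ⟨hu0, hu1⟩
      refine ⟨-(Real.log u) / 2, ?_, ?_⟩
      · have := Real.log_neg hu0 hu1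
        simp only [Set.mem_Ioi]; linarith
      · simp only [hf]
        rw [show -2 * (-(Real.log u) / 2) = Real.log u by ring, Real.exp_log hu0]
  have hderiv : ∀ x ∈ Set.Ioi (0:ℝ),
      HasDerivWithinAt f (-2 * Real.exp (-2 * x)) (Set.Ioi 0) x := by
    intro x _
    have h1 : HasDerivAt (fun x : ℝ => -2 * x) (-2) x := by
      simpa using (hasDerivAt_id x).const_mul (-2)
    have : HasDerivAt f (Real.exp (-2 * x) * (-2)) x :=
      (Real.hasDerivAt_exp (-2 * x)).comp x h1
    exact (by simpa [mul_comm] using this : HasDerivAt f (-2 * Real.exp (-2 * x)) x).hasDerivWithinAt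
  have hinj : Set.InjOn f (Set.Ioi 0) := by
    intro x _ y _ hxy
    have := Real.exp_injective hxy
    linarith
  have hcov := MeasureTheory.integral_image_eq_integral_abs_deriv_smul measurableSet_Ioi
    hderiv hinj G
  rw [himg] at hcov
  have hpt : ∀ x ∈ Set.Ioi (0:ℝ),
      |(-2) * Real.exp (-2 * x)| • G (f x) = 1 / Real.sinh x ^ ν := by
    intro x hx
    simp only [Set.mem_Ioi] at hx
    set E := Real.exp (-2 * x) with hE
    set B := Real.exp (ν * x) with hB
    have he : (0:ℝ) < E := Real.exp_pos _
    have he1 : E < 1 := Real.exp_lt_one_iff.mpr (by linarith)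
    have hnE : (0:ℝ) < 1 - E := by linarith
    have hBp : (0:ℝ) < B := Real.exp_pos _
    have hs : Real.sinh x = Real.exp x * (1 - E) / 2 := by
      rw [hE, Real.sinh_eq, show -x = x + (-2 * x) by ring, Real.exp_add]
      ring
    have habs : |(-2) * E| = 2 * E := by
      rw [abs_of_neg (by nlinarith)]; ring
    have h1 : E ^ (ν / 2 - 1) = B⁻¹ * E⁻¹ :=
      calc E ^ (ν / 2 - 1) = Real.exp (-2 * x * (ν / 2 - 1)) := (Real.exp_mul _ _).symm
        _ = Real.exp (-(ν * x)) * Real.exp (-(-2 * x)) := by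
            rw [← Real.exp_add]; congr 1; ring
        _ = B⁻¹ * E⁻¹ := by rw [Real.exp_neg, Real.exp_neg]
    have h2 : (2:ℝ) ^ (ν - 1) = 2 ^ ν / 2 := by
      rw [Real.rpow_sub two_pos, Real.rpow_one]
    have h3 : Real.sinh x ^ ν = B * (1 - E) ^ ν / 2 ^ ν := by
      rw [hs, Real.div_rpow (mul_nonneg (Real.exp_pos x).le hnE.le) (by norm_num),
        Real.mul_rpow (Real.exp_pos _).le hnE.le, ← Real.exp_mul, hB, mul_comm x ν]
    have h2ν : (0:ℝ) < (2:ℝ) ^ ν := Real.rpow_pos_of_pos two_pos _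
    have hEν : (0:ℝ) < (1 - E) ^ ν := Real.rpow_pos_of_pos hnE _
    rw [smul_eq_mul, habs, hGdef]
    simp only [hf, ← hE]
    rw [h1, h2, h3, Real.rpow_neg hnE.le]
    field_simp
  have hstep1 : ∫ x in Set.Ioi (0:ℝ), 1 / Real.sinh x ^ ν = ∫ u in Set.Ioo (0:ℝ) 1, G u := by
    rw [hcov]
    exact setIntegral_congr_fun measurableSet_Ioi fun x hx => (hpt x hx).symm
  have hstep2 : ∫ u in Set.Ioo (0:ℝ) 1, G u =
      (2:ℝ) ^ (ν - 1) * ∫ u in (0:ℝ)..1, u ^ (ν / 2 - 1) * (1 - u) ^ ((1 - ν) - 1) := by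
    rw [intervalIntegral.integral_of_le zero_le_one,
      ← MeasureTheory.integral_Ioc_eq_integral_Ioo, ← MeasureTheory.integral_const_mul]
    congr 1
    ext u
    rw [hGdef]
    norm_num
  have hbeta := beta_real_aux (ν / 2) (1 - ν) (by linarith) (by linarith)
  have harg : ν / 2 + (1 - ν) = 1 - ν / 2 := by ring
  rw [harg] at hbeta
  have hdup := Real.Gamma_mul_Gamma_add_half (1 / 2 - ν / 2)
  rw [show (1:ℝ) / 2 - ν / 2 + 1 / 2 = 1 - ν / 2 by ring,
    show 2 * ((1:ℝ) / 2 - ν / 2) = 1 - ν by ring,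
    show (1:ℝ) - (1 - ν) = ν by ring] at hdup
  rw [hstep1, hstep2, hbeta]
  have hG1 : 0 < Real.Gamma (1 - ν / 2) := Real.Gamma_pos_of_pos (by linarith)
  have hpi : 0 < Real.sqrt Real.pi := Real.sqrt_pos.mpr Real.pi_pos
  have h2ν : (0:ℝ) < (2:ℝ) ^ ν := Real.rpow_pos_of_pos two_pos _
  have h2 : (2:ℝ) ^ (ν - 1) = 2 ^ ν / 2 := by
    rw [Real.rpow_sub two_pos, Real.rpow_one]
  rw [h2, show (2:ℝ) ^ ν / 2 * (Real.Gamma (ν / 2) * Real.Gamma (1 - ν) / Real.Gamma (1 - ν / 2))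
      = (2 ^ ν * (Real.Gamma (ν / 2) * Real.Gamma (1 - ν))) / (2 * Real.Gamma (1 - ν / 2)) by
    ring, div_eq_div_iff (by positivity) (by positivity)]
  linear_combination (-2 * Real.Gamma (ν / 2)) * hdup
end

section
/- For all real a, b, ν with a ≥ 0, b > 0 and ν > a/b, the integral ∫₀^∞ cosh(a x)/(cosh(b x))^ν dx equals (2^{ν−1}/(2b)) · B(ν/2 + a/(2b), ν/2 − a/(2b)). -/
open Real MeasureTheory Set

lemma beta_Ioo (p q : ℝ) (hp : 0 < p) (hq : 0 < q) :
    ∫ x in Ioo (0:ℝ) 1, x ^ (p-1) * (1-x) ^ (q-1) =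
      Real.Gamma p * Real.Gamma q / Real.Gamma (p+q) := by
  have hre : ∀ x ∈ Set.uIcc (0:ℝ) 1,
      ((x:ℂ) ^ ((p:ℂ)-1) * ((1:ℂ)-x) ^ ((q:ℂ)-1)) =
        ((x ^ (p-1) * (1-x) ^ (q-1) : ℝ) : ℂ) := by
    intro x hx
    rw [Set.uIcc_of_le (by norm_num)] at hx
    push_cast
    rw [Complex.ofReal_cpow hx.1, Complex.ofReal_cpow (by linarith [hx.2])]
    push_cast
    ring
  have h1 : Complex.betaIntegral p q =
      ((∫ x in (0:ℝ)..1, x ^ (p-1) * (1-x) ^ (q-1) : ℝ) : ℂ) := by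
    rw [Complex.betaIntegral, ← intervalIntegral.integral_ofReal]
    exact intervalIntegral.integral_congr hre
  have h2 := Complex.Gamma_mul_Gamma_eq_betaIntegral
    (s := (p:ℂ)) (t := (q:ℂ)) (by simpa using hp) (by simpa using hq)
  rw [h1, ← Complex.ofReal_add, Complex.Gamma_ofReal, Complex.Gamma_ofReal,
    Complex.Gamma_ofReal] at h2
  have h4 : Real.Gamma p * Real.Gamma q =
      Real.Gamma (p+q) * ∫ x in (0:ℝ)..1, x ^ (p-1) * (1-x) ^ (q-1) := by
    exact_mod_cast h2
  have hΓ : (0:ℝ) < Real.Gamma (p+q) := Real.Gamma_pos_of_pos (by linarith)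
  rw [intervalIntegral.integral_of_le (by norm_num), integral_Ioc_eq_integral_Ioo] at h4
  rw [eq_div_iff hΓ.ne']
  linarith [h4]

lemma beta_integrable (p q : ℝ) (hp : 0 < p) (hq : 0 < q) :
    IntegrableOn (fun x : ℝ => x ^ (p-1) * (1-x) ^ (q-1)) (Ioc (0:ℝ) 1) := by
  have hc := Complex.betaIntegral_convergent (u := (p:ℂ)) (v := (q:ℂ))
    (by simpa using hp) (by simpa using hq)
  have hc2 : IntegrableOn (fun x : ℝ => ((x:ℂ) ^ ((p:ℂ)-1) * ((1:ℂ)-x) ^ ((q:ℂ)-1)))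
      (Ioc (0:ℝ) 1) := (intervalIntegrable_iff_integrableOn_Ioc_of_le (by norm_num)).mp hc
  have hre : IntegrableOn (fun x : ℝ => ((x:ℂ) ^ ((p:ℂ)-1) * ((1:ℂ)-x) ^ ((q:ℂ)-1)).re)
      (Ioc (0:ℝ) 1) := hc2.re
  refine (hre.congr_fun ?_ measurableSet_Ioc)
  intro x hx
  have heq : ((x:ℂ) ^ ((p:ℂ)-1) * ((1:ℂ)-x) ^ ((q:ℂ)-1)) =
      ((x ^ (p-1) * (1-x) ^ (q-1) : ℝ) : ℂ) := by
    push_cast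
    rw [Complex.ofReal_cpow hx.1.le, Complex.ofReal_cpow (by linarith [hx.2] : (0:ℝ) ≤ 1 - x)]
    push_cast
    ring
  simp only [heq, Complex.ofReal_re]

lemma img1 : (fun t : ℝ => t/(1+t)) '' Ioo 0 1 = Ioo 0 (1/2) := by
  ext y
  constructor
  · rintro ⟨t, ht, rfl⟩
    have h1 : (0:ℝ) < 1 + t := by linarith [ht.1]
    exact ⟨div_pos ht.1 h1, by rw [div_lt_iff₀ h1]; linarith [ht.2]⟩
  · rintro ⟨hy1, hy2⟩
    refine ⟨y/(1-y), ⟨div_pos hy1 (by linarith), ?_⟩, ?_⟩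
    · rw [div_lt_one (by linarith)]; linarith
    · have h1 : (1:ℝ) - y ≠ 0 := by linarith
      field_simp; ring

lemma img2 : (fun t : ℝ => 1/(1+t)) '' Ioo 0 1 = Ioo (1/2:ℝ) 1 := by
  ext y
  constructor
  · rintro ⟨t, ht, rfl⟩
    have h1 : (0:ℝ) < 1 + t := by linarith [ht.1]
    constructor
    · rw [lt_div_iff₀ h1]; linarith [ht.2]
    · rw [div_lt_one h1]; linarith [ht.1]
  · rintro ⟨hy1, hy2⟩
    have hy0 : (0:ℝ) < y := by linarith
    refine ⟨(1-y)/y, ⟨div_pos (by linarith) hy0, ?_⟩, ?_⟩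
    · rw [div_lt_one hy0]; linarith
    · field_simp; ring

lemma inj1 : Set.InjOn (fun t : ℝ => t/(1+t)) (Ioo 0 1) := by
  intro s hs t ht h
  simp only at h
  have h1 : (0:ℝ) < 1 + s := by linarith [hs.1]
  have h2 : (0:ℝ) < 1 + t := by linarith [ht.1]
  field_simp at h
  linarith

lemma inj2 : Set.InjOn (fun t : ℝ => 1/(1+t)) (Ioo 0 1) := by
  intro s hs t ht h
  simp only at h
  have h1 : (0:ℝ) < 1 + s := by linarith [hs.1]
  have h2 : (0:ℝ) < 1 + t := by linarith [ht.1]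
  field_simp at h
  linarith

lemma ptw1 (p q : ℝ) : ∀ t ∈ Ioo (0:ℝ) 1,
    |1/(1+t)^2| • ((fun x : ℝ => x^(p-1)*(1-x)^(q-1)) (t/(1+t))) = t^(p-1)*(1+t)^(-(p+q)) := by
  intro t ht
  have hu : (0:ℝ) < 1+t := by linarith [ht.1]
  have h1 : 1 - t/(1+t) = 1/(1+t) := by field_simp; ring
  simp only [smul_eq_mul]
  rw [h1, abs_of_pos (by positivity), Real.div_rpow ht.1.le hu.le,
    Real.div_rpow zero_le_one hu.le, Real.one_rpow]
  have e : (-(p+q)) = (-(p-1)) + ((-(q-1)) + (-((2:ℕ):ℝ))) := by push_cast; ring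
  rw [e, Real.rpow_add hu, Real.rpow_add hu, Real.rpow_neg hu.le, Real.rpow_neg hu.le,
    Real.rpow_neg hu.le, Real.rpow_natCast]
  ring

lemma ptw2 (p q : ℝ) : ∀ t ∈ Ioo (0:ℝ) 1,
    |(-(1/(1+t)^2))| • ((fun x : ℝ => x^(p-1)*(1-x)^(q-1)) (1/(1+t))) = t^(q-1)*(1+t)^(-(p+q)) := by
  intro t ht
  have hu : (0:ℝ) < 1+t := by linarith [ht.1]
  have h1 : 1 - 1/(1+t) = t/(1+t) := by field_simp; ring
  simp only [smul_eq_mul]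
  rw [h1, abs_neg, abs_of_pos (by positivity), Real.div_rpow ht.1.le hu.le,
    Real.div_rpow zero_le_one hu.le, Real.one_rpow]
  have e : (-(p+q)) = (-(p-1)) + ((-(q-1)) + (-((2:ℕ):ℝ))) := by push_cast; ring
  rw [e, Real.rpow_add hu, Real.rpow_add hu, Real.rpow_neg hu.le, Real.rpow_neg hu.le,
    Real.rpow_neg hu.le, Real.rpow_natCast]
  ring

lemma d1 (t : ℝ) (ht : t ∈ Ioo (0:ℝ) 1) :
    HasDerivWithinAt (fun s : ℝ => s/(1+s)) (1/(1+t)^2) (Ioo (0:ℝ) 1) t := by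
  have hu : (0:ℝ) < 1+t := by linarith [ht.1]
  have h := (hasDerivAt_id t).div ((hasDerivAt_id t).const_add 1) hu.ne'
  simp only [id_eq] at h
  exact (h.congr_deriv (by ring)).hasDerivWithinAt

lemma d2 (t : ℝ) (ht : t ∈ Ioo (0:ℝ) 1) :
    HasDerivWithinAt (fun s : ℝ => 1/(1+s)) (-(1/(1+t)^2)) (Ioo (0:ℝ) 1) t := by
  have hu : (0:ℝ) < 1+t := by linarith [ht.1]
  have h := (hasDerivAt_const t (1:ℝ)).div ((hasDerivAt_id t).const_add 1) hu.ne'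
  simp only [id_eq] at h
  exact (h.congr_deriv (by ring)).hasDerivWithinAt

lemma img3 (b : ℝ) (hb : 0 < b) :
    (fun x : ℝ => Real.exp ((-(2*b))*x)) '' Ioi 0 = Ioo 0 1 := by
  ext y
  constructor
  · rintro ⟨x, hx, rfl⟩
    refine ⟨Real.exp_pos _, ?_⟩
    rw [Real.exp_lt_one_iff]
    have : (0:ℝ) < x := hx
    nlinarith
  · rintro ⟨hy1, hy2⟩
    refine ⟨Real.log y / (-(2*b)), ?_, ?_⟩
    · have hlog : Real.log y < 0 := Real.log_neg hy1 hy2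
      have : (0:ℝ) < -(2*b) * Real.log y := by nlinarith
      rw [Set.mem_Ioi, div_pos_iff]
      right
      constructor <;> nlinarith
    · simp only
      rw [mul_div_cancel₀ _ (by nlinarith : (-(2*b)) ≠ 0)]
      exact Real.exp_log hy1

lemma inj3 (b : ℝ) (hb : 0 < b) :
    Set.InjOn (fun x : ℝ => Real.exp ((-(2*b))*x)) (Ioi 0) := by
  intro s _ t _ h
  simp only at h
  have := Real.exp_injective h
  have hne : (-(2*b)) ≠ 0 := by nlinarith
  exact mul_left_cancel₀ hne this

lemma d3 (b : ℝ) (x : ℝ) (hx : x ∈ Ioi (0:ℝ)) :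
    HasDerivWithinAt (fun x : ℝ => Real.exp ((-(2*b))*x))
      ((-(2*b)) * Real.exp ((-(2*b))*x)) (Ioi (0:ℝ)) x := by
  have h := ((hasDerivAt_id x).const_mul (-(2*b))).exp
  simp only [id_eq, mul_one] at h
  exact (h.congr_deriv (by ring)).hasDerivWithinAt

lemma ptw3 (a b ν p q x : ℝ) (hb : 0 < b) (hpq : p + q = ν)
    (hP : 2*b*p = ν*b + a) (hQ : 2*b*q = ν*b - a) :
    |(-(2*b)) * Real.exp ((-(2*b))*x)| •
      ((fun t : ℝ => (2:ℝ)^(ν-1)/(2*b) * (t^(p-1)*(1+t)^(-(p+q)) + t^(q-1)*(1+t)^(-(p+q))))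
        (Real.exp ((-(2*b))*x))) =
    Real.cosh (a*x) / Real.cosh (b*x) ^ ν := by
  rw [show -(p+q) = -ν by rw [hpq]]
  have hE : (0:ℝ) < Real.exp ((-(2*b))*x) := Real.exp_pos _
  set E := Real.exp ((-(2*b))*x) with hEdef
  have h2 : (0:ℝ) < 1 + E := by positivity
  simp only [smul_eq_mul]
  have habs : |(-(2*b)) * E| = 2*b*E := by
    rw [abs_mul, abs_neg, abs_of_pos (by positivity), abs_of_pos hE]
  have hexpmul : Real.exp (b*x) * E = Real.exp (-(b*x)) := by
    rw [hEdef, ← Real.exp_add]; ring_nf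
  have hcosh : Real.cosh (b*x) = Real.exp (b*x) * (1+E) / 2 := by
    rw [Real.cosh_eq, mul_add, mul_one, hexpmul]
  have hcoshν : Real.cosh (b*x) ^ ν = Real.exp (ν*(b*x)) * (1+E)^ν / 2^ν := by
    rw [hcosh, Real.div_rpow (by positivity) (by norm_num),
      Real.mul_rpow (Real.exp_pos _).le h2.le, ← Real.exp_mul]
    ring_nf
  have eP : E * E^(p-1) = Real.exp (-(a*x)) * Real.exp (-(ν*(b*x))) := by
    rw [hEdef, ← Real.exp_mul, ← Real.exp_add, ← Real.exp_add]
    congr 1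
    have h3 : (-(2*b))*x + (-(2*b))*x*(p-1) = -(2*b*p*x) := by ring
    rw [h3, show 2*b*p*x = (2*b*p)*x by ring, hP]; ring
  have eQ : E * E^(q-1) = Real.exp (a*x) * Real.exp (-(ν*(b*x))) := by
    rw [hEdef, ← Real.exp_mul, ← Real.exp_add, ← Real.exp_add]
    congr 1
    have h3 : (-(2*b))*x + (-(2*b))*x*(q-1) = -(2*b*q*x) := by ring
    rw [h3, show 2*b*q*x = (2*b*q)*x by ring, hQ]; ring
  have eH : Real.exp (ν*(b*x)) * Real.exp (-(ν*(b*x))) = 1 := by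
    rw [← Real.exp_add, add_neg_cancel, Real.exp_zero]
  rw [habs, Real.cosh_eq, hcoshν, Real.rpow_neg h2.le,
    Real.rpow_sub (by norm_num : (0:ℝ) < 2), Real.rpow_one]
  have h2ν : (0:ℝ) < (2:ℝ)^ν := by positivity
  have h1ν : (0:ℝ) < (1+E)^ν := by positivity
  have hEexp : (0:ℝ) < Real.exp (ν*(b*x)) := Real.exp_pos _
  calc 2*b*E * ((2:ℝ)^ν/2/(2*b) * (E^(p-1)*((1+E)^ν)⁻¹ + E^(q-1)*((1+E)^ν)⁻¹))
      = (2:ℝ)^ν * ((E*E^(p-1)) + (E*E^(q-1))) * ((1+E)^ν)⁻¹ / 2 := by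
        field_simp
    _ = (2:ℝ)^ν * ((Real.exp (-(a*x)) * Real.exp (-(ν*(b*x)))) +
          (Real.exp (a*x) * Real.exp (-(ν*(b*x))))) * ((1+E)^ν)⁻¹ / 2 := by
        rw [eP, eQ]
    _ = (Real.exp (a*x) + Real.exp (-(a*x))) / 2 /
          (Real.exp (ν*(b*x)) * (1+E)^ν / 2^ν) := by
        rw [Real.exp_neg (ν*(b*x))]
        field_simp
        ring
lemma sum_eq (p q : ℝ) (hp : 0 < p) (hq : 0 < q) :
    ∫ t in Ioo (0:ℝ) 1, (t^(p-1)*(1+t)^(-(p+q)) + t^(q-1)*(1+t)^(-(p+q))) =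
      Real.Gamma p * Real.Gamma q / Real.Gamma (p+q) := by
  have hJ1 : ∫ x in Ioo (0:ℝ) (1/2), x^(p-1)*(1-x)^(q-1) =
      ∫ t in Ioo (0:ℝ) 1, t^(p-1)*(1+t)^(-(p+q)) := by
    have h := integral_image_eq_integral_abs_deriv_smul measurableSet_Ioo d1 inj1
      (fun x : ℝ => x^(p-1)*(1-x)^(q-1))
    rw [img1] at h
    rw [h]
    exact setIntegral_congr_fun measurableSet_Ioo (ptw1 p q)
  have hJ2 : ∫ x in Ioo (1/2:ℝ) 1, x^(p-1)*(1-x)^(q-1) =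
      ∫ t in Ioo (0:ℝ) 1, t^(q-1)*(1+t)^(-(p+q)) := by
    have h := integral_image_eq_integral_abs_deriv_smul measurableSet_Ioo d2 inj2
      (fun x : ℝ => x^(p-1)*(1-x)^(q-1))
    rw [img2] at h
    rw [h]
    exact setIntegral_congr_fun measurableSet_Ioo (ptw2 p q)
  have hIp : IntegrableOn (fun t : ℝ => t^(p-1)*(1+t)^(-(p+q))) (Ioo (0:ℝ) 1) := by
    have h := (integrableOn_image_iff_integrableOn_abs_deriv_smul measurableSet_Ioo d1 inj1
      (fun x : ℝ => x^(p-1)*(1-x)^(q-1))).mp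
    rw [img1] at h
    have h2 := h (((beta_integrable p q hp hq).mono_set (by
      intro x hx
      exact ⟨hx.1, by linarith [hx.2]⟩)))
    exact h2.congr_fun (ptw1 p q) measurableSet_Ioo
  have hIq : IntegrableOn (fun t : ℝ => t^(q-1)*(1+t)^(-(p+q))) (Ioo (0:ℝ) 1) := by
    have h := (integrableOn_image_iff_integrableOn_abs_deriv_smul measurableSet_Ioo d2 inj2
      (fun x : ℝ => x^(p-1)*(1-x)^(q-1))).mp
    rw [img2] at h
    have h2 := h (((beta_integrable p q hp hq).mono_set (by
      intro x hx
      exact ⟨by linarith [hx.1], hx.2.le⟩)))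
    exact h2.congr_fun (ptw2 p q) measurableSet_Ioo
  have hsplit : ∫ x in Ioo (0:ℝ) 1, x^(p-1)*(1-x)^(q-1) =
      (∫ x in Ioo (0:ℝ) (1/2), x^(p-1)*(1-x)^(q-1)) +
      ∫ x in Ioo (1/2:ℝ) 1, x^(p-1)*(1-x)^(q-1) := by
    rw [← integral_Ioc_eq_integral_Ioo, ← integral_Ioc_eq_integral_Ioo,
      ← integral_Ioc_eq_integral_Ioo,
      ← Set.Ioc_union_Ioc_eq_Ioc (by norm_num : (0:ℝ) ≤ 1/2) (by norm_num : (1/2:ℝ) ≤ 1),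
      setIntegral_union (Set.Ioc_disjoint_Ioc_of_le le_rfl) measurableSet_Ioc
        ((beta_integrable p q hp hq).mono_set (Set.Ioc_subset_Ioc_right (by norm_num)))
        ((beta_integrable p q hp hq).mono_set (Set.Ioc_subset_Ioc_left (by norm_num)))]
  rw [integral_add hIp hIq, ← hJ1, ← hJ2, ← hsplit, beta_Ioo p q hp hq]

theorem stmt_3 (a b ν : ℝ) (ha : 0 ≤ a) (hb : 0 < b) (hν : a / b < ν) :
    ∫ x in Set.Ioi (0:ℝ), Real.cosh (a * x) / Real.cosh (b * x) ^ ν =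
      (2:ℝ) ^ (ν - 1) / (2 * b) *
        (Real.Gamma (ν / 2 + a / (2 * b)) * Real.Gamma (ν / 2 - a / (2 * b)) /
          Real.Gamma ((ν / 2 + a / (2 * b)) + (ν / 2 - a / (2 * b)))) := by
  set p := ν / 2 + a / (2 * b) with hpdef
  set q := ν / 2 - a / (2 * b) with hqdef
  have hab : a < ν * b := by
    have := (div_lt_iff₀ hb).mp hν
    linarith
  have ha2 : a / (2*b) < ν / 2 := by
    rw [div_lt_div_iff₀ (by positivity) (by norm_num)]
    nlinarith
  have ha0 : (0:ℝ) ≤ a / (2*b) := by positivity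
  have hq : 0 < q := by rw [hqdef]; linarith
  have hp : 0 < p := by rw [hpdef]; linarith
  have hpq : p + q = ν := by rw [hpdef, hqdef]; ring
  have hP : 2*b*p = ν*b + a := by rw [hpdef]; field_simp
  have hQ : 2*b*q = ν*b - a := by rw [hqdef]; field_simp
  have h := integral_image_eq_integral_abs_deriv_smul measurableSet_Ioi (d3 b) (inj3 b hb)
    (fun t : ℝ => (2:ℝ)^(ν-1)/(2*b) * (t^(p-1)*(1+t)^(-(p+q)) + t^(q-1)*(1+t)^(-(p+q))))
  rw [img3 b hb] at h
  have hRHS : (∫ x in Ioi (0:ℝ), |(-(2*b)) * Real.exp ((-(2*b))*x)| •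
      ((fun t : ℝ => (2:ℝ)^(ν-1)/(2*b) * (t^(p-1)*(1+t)^(-(p+q)) + t^(q-1)*(1+t)^(-(p+q))))
        (Real.exp ((-(2*b))*x)))) =
      ∫ x in Ioi (0:ℝ), Real.cosh (a * x) / Real.cosh (b * x) ^ ν :=
    setIntegral_congr_fun measurableSet_Ioi
      (fun x _ => ptw3 a b ν p q x hb hpq hP hQ)
  rw [← hRHS, ← h, integral_const_mul, sum_eq p q hp hq]
end

section
/- Let m be a natural number and let a, b, ν be real with a ≥ 0, b > 0, m·(a/b) < ν < 1 and ν > 0. Then ∫₀^∞ (cosh(a x))^m/(sinh(b x))^ν dx = (2^{ν−m}/(2b)) · Γ(1−ν) · Σ_{r=0}^{m} C(m,r) · Γ(ν/2 + α_r)/Γ(1 − ν/2 + α_r), where α_r := (2r − m)·a/(2b) and C(m,r) is the binomial coefficient. -/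
open Real MeasureTheory

/-- Real Beta integral on `Ioo 0 1`. -/
lemma realBeta {u v : ℝ} (hu : 0 < u) (hv : 0 < v) :
    ∫ t in Set.Ioo (0:ℝ) 1, t ^ (u - 1) * (1 - t) ^ (v - 1) =
      Real.Gamma u * Real.Gamma v / Real.Gamma (u + v) := by
  have hbeta := Complex.Gamma_mul_Gamma_eq_betaIntegral
    (s := (u:ℂ)) (t := (v:ℂ)) (by simpa using hu) (by simpa using hv)
  have hβ : Complex.betaIntegral (u:ℂ) (v:ℂ) =
      ((∫ t in (0:ℝ)..1, t ^ (u - 1) * (1 - t) ^ (v - 1) : ℝ) : ℂ) := by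
    rw [Complex.betaIntegral, ← intervalIntegral.integral_ofReal]
    apply intervalIntegral.integral_congr
    intro x hx
    rw [Set.uIcc_of_le (by norm_num : (0:ℝ) ≤ 1)] at hx
    push_cast
    rw [Complex.ofReal_cpow hx.1, Complex.ofReal_cpow (by linarith [hx.2])]
    push_cast
    ring
  rw [hβ] at hbeta
  have hGuv : Real.Gamma (u + v) ≠ 0 := (Real.Gamma_pos_of_pos (by linarith)).ne'
  have : ((Real.Gamma u * Real.Gamma v : ℝ) : ℂ) =
      ((Real.Gamma (u + v) * ∫ t in (0:ℝ)..1, t ^ (u - 1) * (1 - t) ^ (v - 1) : ℝ) : ℂ) := by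
    push_cast
    rw [Complex.Gamma_ofReal, Complex.Gamma_ofReal, ← Complex.ofReal_add u v,
      Complex.Gamma_ofReal] at hbeta
    exact_mod_cast hbeta
  have h2 := Complex.ofReal_inj.mp this
  rw [intervalIntegral.integral_of_le (by norm_num : (0:ℝ) ≤ 1),
    MeasureTheory.integral_Ioc_eq_integral_Ioo] at h2
  rw [eq_div_iff hGuv]
  linarith [h2]

/-- Integrability of the real Beta integrand. -/
lemma realBeta_integrable {u v : ℝ} (hu : 0 < u) (hv : 0 < v) :
    IntegrableOn (fun t : ℝ => t ^ (u - 1) * (1 - t) ^ (v - 1)) (Set.Ioo 0 1) := by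
  have h := Complex.betaIntegral_convergent (u := (u:ℂ)) (v := (v:ℂ))
    (by simpa using hu) (by simpa using hv)
  rw [intervalIntegrable_iff_integrableOn_Ioo_of_le (by norm_num : (0:ℝ) ≤ 1)] at h
  have h2 := h.re
  apply MeasureTheory.IntegrableOn.congr_fun h2 _ measurableSet_Ioo
  intro x hx
  have h1 : ((x:ℂ)) ^ ((u:ℂ) - 1) * (1 - (x:ℂ)) ^ ((v:ℂ) - 1)
      = ((x ^ (u-1) * (1-x) ^ (v-1) : ℝ) : ℂ) := by
    rw [Complex.ofReal_mul, Complex.ofReal_cpow hx.1.le, Complex.ofReal_cpow (by linarith [hx.2])]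
    push_cast
    ring
  show RCLike.re (((x:ℂ)) ^ ((u:ℂ) - 1) * (1 - (x:ℂ)) ^ ((v:ℂ) - 1)) = _
  rw [h1]
  simp


/-- Core integral: `∫_0^∞ e^{cy} / sinh(y)^ν dy`. -/
lemma sinh_core {c ν : ℝ} (hc : c < ν) (hν2 : ν < 1) :
    IntegrableOn (fun y : ℝ => Real.exp (c*y) / Real.sinh y ^ ν) (Set.Ioi 0) ∧
    ∫ y in Set.Ioi (0:ℝ), Real.exp (c*y) / Real.sinh y ^ ν =
      (2:ℝ)^(ν-1) * (Real.Gamma ((ν-c)/2) * Real.Gamma (1-ν) /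
        Real.Gamma ((ν-c)/2 + (1-ν))) := by
  set u : ℝ := (ν-c)/2 with hu_def
  set v : ℝ := 1-ν with hv_def
  have hu : 0 < u := by simp only [hu_def]; linarith
  have hv : 0 < v := by simp only [hv_def]; linarith
  set f : ℝ → ℝ := fun y => Real.exp (-2*y) with hf_def
  set f' : ℝ → ℝ := fun y => -2*Real.exp (-2*y) with hf'_def
  set g : ℝ → ℝ := fun t => (2:ℝ)^(ν-1) * (t ^ (u-1) * (1-t) ^ (v-1)) with hg_def
  have hderiv : ∀ x ∈ Set.Ioi (0:ℝ), HasDerivWithinAt f (f' x) (Set.Ioi 0) x := by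
    intro x _
    have h1 : HasDerivAt (fun y : ℝ => -2*y) (-2) x := by
      simpa using (hasDerivAt_id x).const_mul (-2:ℝ)
    have h2 := h1.exp
    have : HasDerivAt f (Real.exp (-2*x) * (-2)) x := h2
    refine (this.hasDerivWithinAt).congr_deriv ?_
    simp only [hf'_def]; ring
  have hinj : Set.InjOn f (Set.Ioi 0) := by
    intro x _ y _ h
    have := Real.exp_injective h
    linarith [this]
  have himg : f '' Set.Ioi 0 = Set.Ioo 0 1 := by
    ext t
    constructor
    · rintro ⟨y, hy, rfl⟩
      have hy' : (0:ℝ) < y := hy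
      exact ⟨Real.exp_pos _, Real.exp_lt_one_iff.mpr (by linarith)⟩
    · rintro ⟨ht0, ht1⟩
      refine ⟨-(Real.log t)/2, ?_, ?_⟩
      · have := Real.log_neg ht0 ht1
        simp only [Set.mem_Ioi]; linarith
      · simp only [hf_def]
        rw [show -2 * (-(Real.log t)/2) = Real.log t by ring, Real.exp_log ht0]
  have hEq : ∀ y ∈ Set.Ioi (0:ℝ),
      |f' y| • g (f y) = Real.exp (c*y) / Real.sinh y ^ ν := by
    intro y hy
    have hy0 : (0:ℝ) < y := hy
    have hE0 : 0 < Real.exp (-2*y) := Real.exp_pos _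
    have hE1 : Real.exp (-2*y) < 1 := Real.exp_lt_one_iff.mpr (by linarith)
    have h1E : 0 < 1 - Real.exp (-2*y) := by linarith
    have hsinh : Real.sinh y = Real.exp y * (1 - Real.exp (-2*y)) / 2 := by
      rw [Real.sinh_eq, show (-y) = y + (-2*y) by ring, Real.exp_add]
      ring
    have hs : Real.sinh y ^ ν =
        Real.exp (y*ν) * (1 - Real.exp (-2*y)) ^ ν / (2:ℝ)^ν := by
      rw [hsinh, Real.div_rpow (by positivity) (by norm_num),
        Real.mul_rpow (Real.exp_pos _).le h1E.le, ← Real.exp_mul]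
    have habs : |f' y| = 2 * Real.exp (-2*y) := by
      simp only [hf'_def]
      rw [abs_of_neg (by nlinarith : -2*Real.exp (-2*y) < 0)]
      ring
    have hEu : (Real.exp (-2*y)) ^ (u-1) = Real.exp ((-2*y)*(u-1)) :=
      (Real.exp_mul (-2*y) (u-1)).symm
    have hv1 : ((1:ℝ) - Real.exp (-2*y)) ^ (v-1)
        = (((1:ℝ) - Real.exp (-2*y)) ^ ν)⁻¹ := by
      rw [show v - 1 = -ν by simp only [hv_def]; ring, Real.rpow_neg h1E.le]
    have e1 : Real.exp (-2*y) * Real.exp ((-2*y)*(u-1))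
        = Real.exp (c*y) * (Real.exp (y*ν))⁻¹ := by
      rw [← Real.exp_neg, ← Real.exp_add, ← Real.exp_add]
      congr 1
      simp only [hu_def]; ring
    have e2 : (2:ℝ) * (2:ℝ)^(ν-1) = (2:ℝ)^ν := by
      nth_rewrite 1 [show (2:ℝ) = (2:ℝ)^(1:ℝ) by rw [Real.rpow_one]]
      rw [← Real.rpow_add (by norm_num : (0:ℝ) < 2)]
      norm_num
    rw [smul_eq_mul, habs, hg_def, hs]
    simp only [hf_def]
    rw [hEu, hv1]
    have hne1 : ((1:ℝ) - Real.exp (-2*y)) ^ ν ≠ 0 := (Real.rpow_pos_of_pos h1E ν).ne'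
    have hne2 : Real.exp (y*ν) ≠ 0 := (Real.exp_pos _).ne'
    have hne3 : (2:ℝ)^ν ≠ 0 := (Real.rpow_pos_of_pos (by norm_num) ν).ne'
    calc 2 * Real.exp (-2*y) * ((2:ℝ)^(ν-1) *
          (Real.exp ((-2*y)*(u-1)) * (((1:ℝ) - Real.exp (-2*y)) ^ ν)⁻¹))
        = (2 * (2:ℝ)^(ν-1)) * (Real.exp (-2*y) * Real.exp ((-2*y)*(u-1))) *
          (((1:ℝ) - Real.exp (-2*y)) ^ ν)⁻¹ := by ring
      _ = (2:ℝ)^ν * (Real.exp (c*y) * (Real.exp (y*ν))⁻¹) *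
          (((1:ℝ) - Real.exp (-2*y)) ^ ν)⁻¹ := by rw [e1, e2]
      _ = Real.exp (c*y) / (Real.exp (y*ν) * (1 - Real.exp (-2*y)) ^ ν / (2:ℝ)^ν) := by
          field_simp
  constructor
  · have hInt : IntegrableOn g (Set.Ioo 0 1) :=
      (realBeta_integrable hu hv).const_mul _
    rw [← himg] at hInt
    rw [integrableOn_image_iff_integrableOn_abs_deriv_smul measurableSet_Ioi hderiv hinj g]
      at hInt
    exact hInt.congr_fun (fun y hy => hEq y hy) measurableSet_Ioi
  · have h := integral_image_eq_integral_abs_deriv_smul measurableSet_Ioi hderiv hinj g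
    rw [himg] at h
    have h2 : ∫ y in Set.Ioi (0:ℝ), |f' y| • g (f y)
        = ∫ y in Set.Ioi (0:ℝ), Real.exp (c*y) / Real.sinh y ^ ν :=
      setIntegral_congr_fun measurableSet_Ioi hEq
    rw [h2] at h
    rw [← h, hg_def]
    rw [MeasureTheory.integral_const_mul, realBeta hu hv]


/-- Scaled core integral. -/
lemma sinh_core_b {c ν b : ℝ} (hb : 0 < b) (hc : c/b < ν) (hν2 : ν < 1) :
    IntegrableOn (fun x : ℝ => Real.exp (c*x) / Real.sinh (b*x) ^ ν) (Set.Ioi 0) ∧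
    ∫ x in Set.Ioi (0:ℝ), Real.exp (c*x) / Real.sinh (b*x) ^ ν =
      b⁻¹ * ((2:ℝ)^(ν-1) * (Real.Gamma ((ν-c/b)/2) * Real.Gamma (1-ν) /
        Real.Gamma ((ν-c/b)/2 + (1-ν)))) := by
  obtain ⟨hI, hV⟩ := sinh_core hc hν2
  have hfun : ∀ x : ℝ, Real.exp ((c/b)*(b*x)) / Real.sinh (b*x) ^ ν
      = Real.exp (c*x) / Real.sinh (b*x) ^ ν := by
    intro x
    congr 2
    field_simp
  constructor
  · have h := (integrableOn_Ioi_comp_mul_left_iff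
      (fun y : ℝ => Real.exp ((c/b)*y) / Real.sinh y ^ ν) 0 hb).mpr (by rwa [mul_zero])
    exact (h.congr_fun (fun x _ => hfun x) measurableSet_Ioi)
  · have h := MeasureTheory.integral_comp_mul_left_Ioi
      (fun y : ℝ => Real.exp ((c/b)*y) / Real.sinh y ^ ν) 0 hb
    rw [mul_zero] at h
    have h2 : ∫ x in Set.Ioi (0:ℝ), Real.exp ((c/b)*(b*x)) / Real.sinh (b*x) ^ ν
        = ∫ x in Set.Ioi (0:ℝ), Real.exp (c*x) / Real.sinh (b*x) ^ ν :=
      setIntegral_congr_fun measurableSet_Ioi (fun x _ => hfun x)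
    rw [h2] at h
    rw [h, hV, smul_eq_mul]

theorem stmt_4 (m : ℕ) (a b ν : ℝ) (ha : 0 ≤ a) (hb : 0 < b)
    (hν1 : (m : ℝ) * (a / b) < ν) (hν2 : ν < 1) (hν0 : 0 < ν) :
    ∫ x in Set.Ioi (0:ℝ), Real.cosh (a * x) ^ m / Real.sinh (b * x) ^ ν =
      (2:ℝ) ^ (ν - (m : ℝ)) / (2 * b) * Real.Gamma (1 - ν) *
        ∑ r ∈ Finset.range (m + 1), (m.choose r : ℝ) *
          (Real.Gamma (ν / 2 + (2 * (r : ℝ) - (m : ℝ)) * a / (2 * b)) /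
            Real.Gamma (1 - ν / 2 + (2 * (r : ℝ) - (m : ℝ)) * a / (2 * b))) := by
  have hcb : ∀ r ∈ Finset.range (m+1), ((2*(r:ℝ) - (m:ℝ)) * a) / b < ν := by
    intro r hr
    have hr' : (r:ℝ) ≤ (m:ℝ) := by
      exact_mod_cast Nat.lt_succ_iff.mp (Finset.mem_range.mp hr)
    have h1 : (2*(r:ℝ) - (m:ℝ)) * a ≤ (m:ℝ) * a := by nlinarith
    have h2 : ((2*(r:ℝ) - (m:ℝ)) * a) / b ≤ ((m:ℝ) * a) / b := by gcongr
    have h3 : ((m:ℝ) * a) / b < ν := by rwa [← mul_div_assoc] at hν1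
    linarith
  have hpt : ∀ x ∈ Set.Ioi (0:ℝ),
      Real.cosh (a*x) ^ m / Real.sinh (b*x) ^ ν
      = ∑ r ∈ Finset.range (m+1), (m.choose r : ℝ) * ((2:ℝ)^m)⁻¹ *
          (Real.exp ((2*(r:ℝ)-(m:ℝ))*a*x) / Real.sinh (b*x) ^ ν) := by
    intro x _
    have hcosh : Real.cosh (a*x) ^ m = ∑ r ∈ Finset.range (m+1),
        (m.choose r : ℝ) * ((2:ℝ)^m)⁻¹ * Real.exp ((2*(r:ℝ)-(m:ℝ))*a*x) := by
      rw [Real.cosh_eq, div_pow, add_pow, Finset.sum_div]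
      apply Finset.sum_congr rfl
      intro r hr
      have hrm : r ≤ m := Nat.lt_succ_iff.mp (Finset.mem_range.mp hr)
      rw [← Real.exp_nat_mul, ← Real.exp_nat_mul, ← Real.exp_add, Nat.cast_sub hrm]
      rw [show (r:ℝ)*(a*x) + ((m:ℝ)-(r:ℝ))*(-(a*x)) = (2*(r:ℝ)-(m:ℝ))*a*x by ring]
      ring
    rw [hcosh, Finset.sum_div]
    apply Finset.sum_congr rfl
    intro r _
    ring
  rw [setIntegral_congr_fun measurableSet_Ioi hpt]
  rw [MeasureTheory.integral_finset_sum _ (fun r hr =>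
    ((sinh_core_b hb (hcb r hr) hν2).1.const_mul _))]
  have hval : ∀ r ∈ Finset.range (m+1),
      (∫ x in Set.Ioi (0:ℝ), (m.choose r : ℝ) * ((2:ℝ)^m)⁻¹ *
        (Real.exp ((2*(r:ℝ)-(m:ℝ))*a*x) / Real.sinh (b*x) ^ ν))
      = (m.choose r : ℝ) * ((2:ℝ)^m)⁻¹ * (b⁻¹ * ((2:ℝ)^(ν-1) *
          (Real.Gamma ((ν-((2*(r:ℝ)-(m:ℝ))*a)/b)/2) * Real.Gamma (1-ν) /
            Real.Gamma ((ν-((2*(r:ℝ)-(m:ℝ))*a)/b)/2 + (1-ν))))) := by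
    intro r hr
    rw [MeasureTheory.integral_const_mul, (sinh_core_b hb (hcb r hr) hν2).2]
  rw [Finset.sum_congr rfl hval]
  rw [Finset.mul_sum, ← Finset.sum_range_reflect]
  apply Finset.sum_congr rfl
  intro r hr
  have hrm : r ≤ m := Nat.lt_succ_iff.mp (Finset.mem_range.mp hr)
  simp only [Nat.add_sub_cancel]
  have hb' : b ≠ 0 := hb.ne'
  have e1 : (ν-((2*(((m-r:ℕ)):ℝ)-(m:ℝ))*a)/b)/2
      = ν/2 + (2*(r:ℝ)-(m:ℝ))*a/(2*b) := by
    rw [Nat.cast_sub hrm]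
    field_simp
    ring
  have e2 : (ν-((2*(((m-r:ℕ)):ℝ)-(m:ℝ))*a)/b)/2 + (1-ν)
      = 1 - ν/2 + (2*(r:ℝ)-(m:ℝ))*a/(2*b) := by
    rw [Nat.cast_sub hrm]
    field_simp
    ring
  rw [e2, e1, Nat.choose_symm hrm]
  have hpow : (2:ℝ)^(ν-(m:ℝ)) = 2 * (2:ℝ)^(ν-1) * ((2:ℝ)^((m:ℝ)))⁻¹ := by
    have h1 : (2:ℝ) * (2:ℝ)^(ν-1) = (2:ℝ)^ν := by
      nth_rewrite 1 [← Real.rpow_one 2]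
      rw [← Real.rpow_add (by norm_num : (0:ℝ) < 2)]
      norm_num
    rw [h1, ← Real.rpow_neg (by norm_num : (0:ℝ) ≤ 2),
      ← Real.rpow_add (by norm_num : (0:ℝ) < 2)]
    ring_nf
  rw [hpow, ← Real.rpow_natCast 2 m]
  ring
end

section
/- Let m be a natural number and let a, b, ν be real with a ≥ 0, b > 0, m·(a/b) < ν < m + 1, ν > 0, and ν not a positive integer. Then ∫₀^∞ (sinh(a x))^m/(sinh(b x))^ν dx = (2^{ν−m}/(2b)) · Γ(1−ν) · Σ_{r=0}^{m} (−1)^r · C(m,r) · Γ(ν/2 + α_r)/Γ(1 − ν/2 + α_r), where α_r := (2r − m)·a/(2b) and C(m,r) is the binomial coefficient. -/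
open Real MeasureTheory Set

namespace Stmt5Aux



lemma one_sub_rpow_le {s t : ℝ} (hs : 0 < s) (h0 : 0 < t) (h1 : t ≤ 1) :
    1 - t ^ s ≤ max s 1 * (1 - t) := by
  rcases le_total s 1 with h | h
  · have : t ^ (1:ℝ) ≤ t ^ s := Real.rpow_le_rpow_of_exponent_ge h0 h1 h
    rw [Real.rpow_one] at this
    nlinarith [le_max_right s 1]
  · have hb : 1 + s * (t - 1) ≤ (1 + (t - 1)) ^ s :=
      one_add_mul_self_le_rpow_one_add (by linarith) h
    have : (1 + (t - 1)) = t := by ring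
    rw [this] at hb
    nlinarith [le_max_left s 1]

lemma one_sub_rpow_nonneg {s t : ℝ} (hs : 0 ≤ s) (h0 : 0 ≤ t) (h1 : t ≤ 1) :
    0 ≤ 1 - t ^ s :=
  sub_nonneg.mpr (Real.rpow_le_one h0 h1 hs)

lemma abs_log_le {δ u : ℝ} (hδ : 0 < δ) (h0 : 0 < u) (h1 : u ≤ 1) :
    |Real.log u| ≤ δ⁻¹ * u ^ (-δ) := by
  have hlog : Real.log u ≤ 0 := Real.log_nonpos (le_of_lt h0) h1
  rw [abs_of_nonpos hlog]
  have h2 : Real.log (u ^ (-δ)) ≤ u ^ (-δ) - 1 :=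
    Real.log_le_sub_one_of_pos (Real.rpow_pos_of_pos h0 _)
  rw [Real.log_rpow h0] at h2
  have h3 : (0:ℝ) < u ^ (-δ) := Real.rpow_pos_of_pos h0 _
  have := mul_le_mul_of_nonneg_left h2 (le_of_lt (inv_pos.mpr hδ))
  calc -Real.log u = δ⁻¹ * (-δ * Real.log u) := by field_simp
    _ ≤ δ⁻¹ * (u ^ (-δ) - 1) := this
    _ ≤ δ⁻¹ * u ^ (-δ) := by nlinarith [inv_pos.mpr hδ]

lemma betaInt {p q : ℝ} (hp : 0 < p) (hq : 0 < q) :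
    IntegrableOn (fun t : ℝ => t ^ (p - 1) * (1 - t) ^ (q - 1)) (Ioo (0:ℝ) 1) := by
  have h := (Complex.betaIntegral_convergent (u := (p:ℂ)) (v := (q:ℂ))
      (by simpa using hp) (by simpa using hq))
  have h2 : IntegrableOn (fun t : ℝ => (t:ℂ) ^ ((p:ℂ) - 1) * (1 - (t:ℂ)) ^ ((q:ℂ) - 1))
      (Ioo (0:ℝ) 1) :=
    ((intervalIntegrable_iff_integrableOn_Ioc_of_le zero_le_one).mp h).mono_set
      Ioo_subset_Ioc_self
  have h3 := h2.norm
  refine IntegrableOn.congr_fun h3 (fun t ht => ?_) measurableSet_Ioo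
  have ht0 : 0 < t := ht.1
  have ht1 : 0 < 1 - t := by linarith [ht.2]
  rw [norm_mul]
  have e1 : ‖(t:ℂ) ^ ((p:ℂ) - 1)‖ = t ^ (p - 1) := by
    rw [Complex.norm_cpow_eq_rpow_re_of_pos ht0]
    norm_num
  have e2 : ‖(1 - (t:ℂ)) ^ ((q:ℂ) - 1)‖ = (1 - t) ^ (q - 1) := by
    rw [show (1 - (t:ℂ)) = ((1 - t : ℝ) : ℂ) by push_cast; ring,
      Complex.norm_cpow_eq_rpow_re_of_pos ht1]
    norm_num
  rw [e1, e2]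



noncomputable def F (p s : ℝ) (m : ℕ) (ν : ℂ) (t : ℝ) : ℂ :=
  ((t ^ (p - 1) * (1 - t ^ s) ^ m : ℝ) : ℂ) * ((1 - t : ℝ) : ℂ) ^ (-ν)

lemma norm_F {p s : ℝ} (hs : 0 < s) (m : ℕ) (ν : ℂ) {t : ℝ} (ht : t ∈ Ioo (0:ℝ) 1) :
    ‖F p s m ν t‖ = t ^ (p - 1) * (1 - t ^ s) ^ m * (1 - t) ^ (-ν.re) := by
  have ht0 : (0:ℝ) < t := ht.1
  have ht1 : (0:ℝ) < 1 - t := by linarith [ht.2]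
  have h1 : 0 ≤ 1 - t ^ s := sub_nonneg.mpr (Real.rpow_le_one ht0.le ht.2.le hs.le)
  rw [F, norm_mul, Complex.norm_real, Real.norm_eq_abs,
    Complex.norm_cpow_eq_rpow_re_of_pos ht1, Complex.neg_re,
    abs_of_nonneg (by positivity)]

lemma F_norm_le {p s : ℝ} (hs : 0 < s) (m : ℕ) {ν : ℂ} {c : ℝ} (hc : ν.re ≤ c)
    {t : ℝ} (ht : t ∈ Ioo (0:ℝ) 1) :
    ‖F p s m ν t‖ ≤ (max s 1) ^ m * (t ^ (p - 1) * (1 - t) ^ ((m + 1 - c) - 1)) := by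
  have ht0 : (0:ℝ) < t := ht.1
  have ht1 : (0:ℝ) < 1 - t := by linarith [ht.2]
  have ht1' : (1:ℝ) - t ≤ 1 := by linarith [ht.1]
  have h1 : 0 ≤ 1 - t ^ s := sub_nonneg.mpr (Real.rpow_le_one ht0.le ht.2.le hs.le)
  rw [norm_F hs m ν ht]
  have h2 : (1 - t ^ s) ^ m ≤ (max s 1) ^ m * (1 - t) ^ m := by
    rw [← mul_pow]
    exact pow_le_pow_left₀ h1 (one_sub_rpow_le hs ht0 ht.2.le) m
  have h3 : (1 - t) ^ m * (1 - t) ^ (-ν.re) ≤ (1 - t) ^ ((m + 1 - c) - 1) := by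
    rw [← Real.rpow_natCast (1 - t) m, ← Real.rpow_add ht1]
    exact Real.rpow_le_rpow_of_exponent_ge ht1 ht1' (by linarith)
  have h4 : (0:ℝ) < t ^ (p - 1) := Real.rpow_pos_of_pos ht0 _
  calc t ^ (p - 1) * (1 - t ^ s) ^ m * (1 - t) ^ (-ν.re)
      ≤ t ^ (p - 1) * ((max s 1) ^ m * (1 - t) ^ m) * (1 - t) ^ (-ν.re) := by
        have := Real.rpow_pos_of_pos ht1 (-ν.re)
        nlinarith [mul_le_mul_of_nonneg_left h2 h4.le]
    _ = (max s 1) ^ m * (t ^ (p - 1) * ((1 - t) ^ m * (1 - t) ^ (-ν.re))) := by ring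
    _ ≤ (max s 1) ^ m * (t ^ (p - 1) * (1 - t) ^ ((m + 1 - c) - 1)) := by
        have hK : (0:ℝ) ≤ (max s 1) ^ m := by positivity
        exact mul_le_mul_of_nonneg_left (mul_le_mul_of_nonneg_left h3 h4.le) hK

lemma contOn_aux1 (p : ℝ) : ContinuousOn (fun t : ℝ => t ^ (p - 1)) (Ioo (0:ℝ) 1) :=
  fun t ht => (Real.continuousAt_rpow_const t _ (Or.inl (ne_of_gt ht.1))).continuousWithinAt

lemma contOn_real (p s : ℝ) (m : ℕ) :
    ContinuousOn (fun t : ℝ => t ^ (p - 1) * (1 - t ^ s) ^ m) (Ioo (0:ℝ) 1) := by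
  refine (contOn_aux1 p).mul (ContinuousOn.pow ?_ m)
  refine continuousOn_const.sub ?_
  exact fun t ht => (Real.continuousAt_rpow_const t _ (Or.inl (ne_of_gt ht.1))).continuousWithinAt

lemma contOn_cpow (ν : ℂ) : ContinuousOn (fun t : ℝ => ((1 - t : ℝ) : ℂ) ^ (-ν))
    (Ioo (0:ℝ) 1) := by
  intro t ht
  have ht1 : (0:ℝ) < 1 - t := by linarith [ht.2]
  have hmem : ((1 - t : ℝ) : ℂ) ∈ Complex.slitPlane := by
    rw [Complex.mem_slitPlane_iff]; left; simpa using ht1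
  have houter : ContinuousAt (fun z : ℂ => z ^ (-ν)) ((1 - t : ℝ) : ℂ) :=
    continuousAt_cpow_const hmem
  have hinner : ContinuousAt (fun u : ℝ => ((1 - u : ℝ) : ℂ)) t := by fun_prop
  exact (ContinuousAt.comp (x := t) houter hinner).continuousWithinAt

lemma contOn_clog : ContinuousOn (fun t : ℝ => Complex.log ((1 - t : ℝ) : ℂ))
    (Ioo (0:ℝ) 1) := by
  intro t ht
  have ht1 : (0:ℝ) < 1 - t := by linarith [ht.2]
  have hmem : ((1 - t : ℝ) : ℂ) ∈ Complex.slitPlane := by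
    rw [Complex.mem_slitPlane_iff]; left; simpa using ht1
  have houter := continuousAt_clog hmem
  have hinner : ContinuousAt (fun u : ℝ => ((1 - u : ℝ) : ℂ)) t := by fun_prop
  exact (ContinuousAt.comp (x := t) houter hinner).continuousWithinAt

lemma F_meas (p s : ℝ) (m : ℕ) (ν : ℂ) :
    AEStronglyMeasurable (F p s m ν) (volume.restrict (Ioo (0:ℝ) 1)) := by
  refine ContinuousOn.aestronglyMeasurable ?_ measurableSet_Ioo
  exact (Complex.continuous_ofReal.comp_continuousOn (contOn_real p s m)).mul (contOn_cpow ν)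

lemma F_integrableOn {p s : ℝ} (hp : 0 < p) (hs : 0 < s) (m : ℕ) {ν : ℂ}
    (hν : ν.re < m + 1) : IntegrableOn (F p s m ν) (Ioo (0:ℝ) 1) := by
  have hq : 0 < (m:ℝ) + 1 - ν.re := by linarith
  have hbound : IntegrableOn
      (fun t : ℝ => (max s 1) ^ m * (t ^ (p - 1) * (1 - t) ^ ((m + 1 - ν.re) - 1)))
      (Ioo (0:ℝ) 1) := (betaInt hp hq).const_mul _
  refine Integrable.mono' hbound (F_meas p s m ν) ?_
  filter_upwards [ae_restrict_mem measurableSet_Ioo] with t ht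
  exact F_norm_le hs m le_rfl ht




noncomputable def L (p s : ℝ) (m : ℕ) (ν : ℂ) : ℂ := ∫ t in Ioo (0:ℝ) 1, F p s m ν t

noncomputable def Hc (p s : ℝ) (m : ℕ) (ν : ℂ) : ℂ :=
  ∑ r ∈ Finset.range (m + 1), (-1 : ℂ) ^ r * (m.choose r : ℂ) *
    Complex.Gamma ((p + r * s : ℝ) : ℂ) * (Complex.Gamma (((p + r * s : ℝ) : ℂ) + 1 - ν))⁻¹

lemma sum_expand (p s : ℝ) (m : ℕ) {t : ℝ} (ht : 0 < t) :
    t ^ (p - 1) * (1 - t ^ s) ^ m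
      = ∑ r ∈ Finset.range (m + 1), (-1:ℝ) ^ r * (m.choose r : ℝ) * t ^ (p + r * s - 1) := by
  have h1 : (1 - t ^ s) ^ m = (-(t^s) + 1) ^ m := by ring_nf
  rw [h1, add_pow, Finset.mul_sum]
  refine Finset.sum_congr rfl fun r hr => ?_
  have h3 : (t^s)^r = t^(s * r) := by rw [Real.rpow_mul ht.le, Real.rpow_natCast]
  have h4 : t^(p-1) * t^(s*(r:ℕ)) = t^(p + r*s - 1) := by
    rw [← Real.rpow_add ht]; congr 1; ring
  calc t^(p-1) * ((-(t^s))^r * 1^(m-r) * (m.choose r))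
      = (-1:ℝ)^r * (m.choose r) * (t^(p-1) * (t^s)^r) := by rw [neg_pow]; ring
    _ = (-1:ℝ)^r * (m.choose r) * t^(p + r*s - 1) := by rw [h3, h4]

lemma base {p s : ℝ} (hp : 0 < p) (hs : 0 < s) (m : ℕ) {ν : ℂ} (hν : ν.re < 1) :
    L p s m ν = Complex.Gamma (1 - ν) * Hc p s m ν := by
  have hint : ∀ r : ℕ, IntegrableOn
      (fun t : ℝ => ((t ^ (p + r * s - 1) : ℝ) : ℂ) * ((1 - t : ℝ) : ℂ) ^ (-ν))
      (Ioo (0:ℝ) 1) := by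
    intro r
    have h0 : 0 < p + r * s := by positivity
    have h := F_integrableOn (p := p + r*s) (s := s) h0 hs 0 (by norm_num; linarith)
    refine IntegrableOn.congr_fun h (fun t ht => ?_) measurableSet_Ioo
    simp [F]
  have step1 : L p s m ν = ∑ r ∈ Finset.range (m+1),
      ∫ t in Ioo (0:ℝ) 1, ((-1:ℂ)^r * (m.choose r : ℂ)) *
        (((t ^ (p + r * s - 1) : ℝ) : ℂ) * ((1 - t : ℝ) : ℂ) ^ (-ν)) := by
    rw [L, ← integral_finset_sum]
    · refine setIntegral_congr_fun measurableSet_Ioo fun t ht => ?_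
      rw [F, sum_expand p s m ht.1]
      push_cast
      rw [Finset.sum_mul]
      exact Finset.sum_congr rfl fun r hr => by ring
    · exact fun r hr => (hint r).const_mul _
  have step2 : ∀ r : ℕ, (∫ t in Ioo (0:ℝ) 1,
        ((t ^ (p + r*s - 1) : ℝ):ℂ) * ((1-t:ℝ):ℂ)^(-ν))
      = Complex.Gamma ((p + r*s : ℝ):ℂ) * Complex.Gamma (1-ν) *
        (Complex.Gamma (((p + r*s : ℝ):ℂ) + 1 - ν))⁻¹ := by
    intro r
    set u : ℂ := ((p + r*s : ℝ):ℂ) with hu_def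
    have hur : 0 < u.re := by
      rw [hu_def, Complex.ofReal_re]; positivity
    have hvr : 0 < (1-ν).re := by
      rw [Complex.sub_re, Complex.one_re]; linarith
    have hbeta := Complex.Gamma_mul_Gamma_eq_betaIntegral hur hvr
    have hne : Complex.Gamma (u + (1-ν)) ≠ 0 := by
      refine Complex.Gamma_ne_zero_of_re_pos ?_
      rw [Complex.add_re]; linarith
    have heq : (∫ t in Ioo (0:ℝ) 1, ((t ^ (p + r*s - 1) : ℝ):ℂ) * ((1-t:ℝ):ℂ)^(-ν))
        = Complex.betaIntegral u (1-ν) := by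
      rw [Complex.betaIntegral, intervalIntegral.integral_of_le zero_le_one,
        ← integral_Ioc_eq_integral_Ioo]
      refine setIntegral_congr_fun measurableSet_Ioc fun t ht => ?_
      rw [Complex.ofReal_cpow ht.1.le]
      congr 1
      · congr 1
        rw [hu_def]; push_cast; ring
      · congr 1
        · push_cast; ring
        · ring
    rw [heq]
    have : Complex.betaIntegral u (1-ν) = (Complex.Gamma (u + (1-ν)))⁻¹ *
        (Complex.Gamma u * Complex.Gamma (1-ν)) := by
      rw [eq_inv_mul_iff_mul_eq₀ hne, ← hbeta]
    rw [this, show u + (1-ν) = u + 1 - ν from by ring]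
    ring
  rw [step1]
  rw [Hc, Finset.mul_sum]
  refine Finset.sum_congr rfl fun r hr => ?_
  rw [MeasureTheory.integral_const_mul, step2 r]
  ring






noncomputable def Fd (p s : ℝ) (m : ℕ) (ν : ℂ) (t : ℝ) : ℂ :=
  -(Complex.log ((1 - t : ℝ) : ℂ)) * F p s m ν t

lemma hasDerivAt_F (p s : ℝ) (m : ℕ) (ν : ℂ) {t : ℝ} (ht : t ∈ Ioo (0:ℝ) 1) :
    HasDerivAt (fun z => F p s m z t) (Fd p s m ν t) ν := by
  have ht1 : (0:ℝ) < 1 - t := by linarith [ht.2]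
  have hz : ((1 - t : ℝ) : ℂ) ≠ 0 := by
    simp only [ne_eq, Complex.ofReal_eq_zero]; linarith
  have h1 : HasDerivAt (fun y : ℂ => ((1 - t : ℝ):ℂ) ^ y)
      (((1 - t : ℝ):ℂ) ^ (-ν) * Complex.log ((1 - t : ℝ):ℂ)) (-ν) :=
    (Complex.hasStrictDerivAt_const_cpow (Or.inl hz)).hasDerivAt
  have h2 : HasDerivAt (fun z : ℂ => -z) (-1 : ℂ) ν := (hasDerivAt_id ν).neg
  have h3 := h1.comp ν h2
  have h4 := h3.const_mul (((t ^ (p - 1) * (1 - t ^ s) ^ m : ℝ) : ℂ))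
  refine h4.congr_deriv ?_
  rw [Fd, F]; ring

lemma Fd_meas (p s : ℝ) (m : ℕ) (ν : ℂ) :
    AEStronglyMeasurable (Fd p s m ν) (volume.restrict (Ioo (0:ℝ) 1)) := by
  refine ContinuousOn.aestronglyMeasurable ?_ measurableSet_Ioo
  exact (contOn_clog.neg).mul
    ((Complex.continuous_ofReal.comp_continuousOn (contOn_real p s m)).mul (contOn_cpow ν))

lemma L_diff {p s : ℝ} (hp : 0 < p) (hs : 0 < s) (m : ℕ) {ν₀ : ℂ} (hν : ν₀.re < m + 1) :
    DifferentiableAt ℂ (L p s m) ν₀ := by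
  set ε : ℝ := (m + 1 - ν₀.re) / 4 with hε_def
  have hε : 0 < ε := by rw [hε_def]; linarith
  have hq : (0:ℝ) < 2 * ε := by linarith
  have hBint : IntegrableOn
      (fun t : ℝ => (ε⁻¹ * (max s 1) ^ m) * (t ^ (p - 1) * (1 - t) ^ ((2*ε) - 1)))
      (Ioo (0:ℝ) 1) := by
    exact (betaInt hp hq).const_mul (ε⁻¹ * (max s 1) ^ m)
  have h_bound : ∀ᵐ t ∂(volume.restrict (Ioo (0:ℝ) 1)), ∀ ν ∈ Metric.ball ν₀ ε,
      ‖Fd p s m ν t‖ ≤ (ε⁻¹ * (max s 1) ^ m) * (t ^ (p - 1) * (1 - t) ^ ((2*ε) - 1)) := by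
    filter_upwards [ae_restrict_mem measurableSet_Ioo] with t ht ν hν'
    have ht0 : (0:ℝ) < t := ht.1
    have ht1 : (0:ℝ) < 1 - t := by linarith [ht.2]
    have ht1' : (1:ℝ) - t ≤ 1 := by linarith
    have hre : ν.re ≤ ν₀.re + ε := by
      have h5 := Complex.abs_re_le_norm (ν - ν₀)
      rw [Complex.sub_re] at h5
      have := Metric.mem_ball.mp hν'
      rw [Complex.dist_eq] at this
      have := abs_le.mp (le_of_lt (lt_of_le_of_lt h5 this))
      linarith [this.2]
    have hlog : ‖Complex.log ((1 - t : ℝ):ℂ)‖ ≤ ε⁻¹ * (1 - t) ^ (-ε) := by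
      rw [← Complex.ofReal_log ht1.le, Complex.norm_real, Real.norm_eq_abs]
      exact abs_log_le hε ht1 ht1'
    have hF := F_norm_le (p := p) (ν := ν) (c := ν₀.re + ε) hs m hre ht
    have hnorm : ‖Fd p s m ν t‖ = ‖Complex.log ((1 - t : ℝ):ℂ)‖ * ‖F p s m ν t‖ := by
      rw [Fd, norm_mul, norm_neg]
    rw [hnorm]
    have hFpos : 0 ≤ ‖F p s m ν t‖ := norm_nonneg _
    have hlogpos : 0 ≤ ‖Complex.log ((1 - t : ℝ):ℂ)‖ := norm_nonneg _
    calc ‖Complex.log ((1 - t : ℝ):ℂ)‖ * ‖F p s m ν t‖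
        ≤ (ε⁻¹ * (1 - t) ^ (-ε)) * ((max s 1) ^ m *
            (t ^ (p - 1) * (1 - t) ^ ((m + 1 - (ν₀.re + ε)) - 1))) := by
          exact mul_le_mul hlog hF hFpos (by positivity)
      _ = (ε⁻¹ * (max s 1) ^ m) * (t ^ (p - 1) *
            ((1 - t) ^ (-ε) * (1 - t) ^ ((m + 1 - (ν₀.re + ε)) - 1))) := by ring
      _ = (ε⁻¹ * (max s 1) ^ m) * (t ^ (p - 1) * (1 - t) ^ ((2*ε) - 1)) := by
          rw [← Real.rpow_add ht1]
          congr 2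
          rw [hε_def]; ring
  have h_diff : ∀ᵐ t ∂(volume.restrict (Ioo (0:ℝ) 1)), ∀ ν ∈ Metric.ball ν₀ ε,
      HasDerivAt (fun z => F p s m z t) (Fd p s m ν t) ν := by
    filter_upwards [ae_restrict_mem measurableSet_Ioo] with t ht ν _
    exact hasDerivAt_F p s m ν ht
  have := hasDerivAt_integral_of_dominated_loc_of_deriv_le (Metric.ball_mem_nhds ν₀ hε)
    (Filter.Eventually.of_forall fun ν => F_meas p s m ν)
    (F_integrableOn hp hs m hν) (Fd_meas p s m ν₀) h_bound hBint h_diff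
  exact this.2.differentiableAt








lemma Hc_diff (p s : ℝ) (m : ℕ) : Differentiable ℂ (Hc p s m) := by
  rw [show Hc p s m = fun ν => ∑ r ∈ Finset.range (m + 1),
      (-1 : ℂ) ^ r * (m.choose r : ℂ) * Complex.Gamma ((p + r * s : ℝ) : ℂ) *
      (Complex.Gamma (((p + r * s : ℝ) : ℂ) + 1 - ν))⁻¹ from rfl]
  refine Differentiable.fun_sum fun r _ => ?_
  refine Differentiable.mul (differentiable_const _) ?_
  have h1 : Differentiable ℂ (fun ν : ℂ => ((p + r * s : ℝ) : ℂ) + 1 - ν) :=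
    (differentiable_const _).sub differentiable_id
  exact Complex.differentiable_one_div_Gamma.comp h1

lemma key {p s : ℝ} (hp : 0 < p) (hs : 0 < s) (m : ℕ) {ν : ℂ} (hν : ν.re < m + 1)
    (hne : Complex.Gamma (1 - ν) ≠ 0) :
    L p s m ν = Complex.Gamma (1 - ν) * Hc p s m ν := by
  set U : Set ℂ := {z : ℂ | z.re < m + 1} with hU_def
  have hUopen : IsOpen U := isOpen_lt Complex.continuous_re continuous_const
  have hUconv : Convex ℝ U := convex_halfSpace_re_lt _
  have hG : AnalyticOnNhd ℂ (fun z => (Complex.Gamma (1 - z))⁻¹ * L p s m z) U := by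
    refine DifferentiableOn.analyticOnNhd (fun z hz => ?_) hUopen
    refine DifferentiableAt.differentiableWithinAt ?_
    have h1 : DifferentiableAt ℂ (fun z : ℂ => (Complex.Gamma (1 - z))⁻¹) z :=
      (Complex.differentiable_one_div_Gamma.comp
        ((differentiable_const (1:ℂ)).sub differentiable_id)).differentiableAt
    exact h1.mul (L_diff hp hs m hz)
  have hH : AnalyticOnNhd ℂ (Hc p s m) U :=
    (Hc_diff p s m).differentiableOn.analyticOnNhd hUopen
  have h0 : (0:ℂ) ∈ U := by
    simp only [hU_def, mem_setOf_eq, Complex.zero_re]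
    positivity
  have hfreq : (fun z => (Complex.Gamma (1 - z))⁻¹ * L p s m z) =ᶠ[nhds 0] Hc p s m := by
    have hmem : {z : ℂ | z.re < 1} ∈ nhds (0:ℂ) :=
      (isOpen_lt Complex.continuous_re continuous_const).mem_nhds (by simp)
    filter_upwards [hmem] with z hz
    rw [base hp hs m hz, inv_mul_cancel_left₀]
    refine Complex.Gamma_ne_zero_of_re_pos ?_
    rw [Complex.sub_re, Complex.one_re]
    exact sub_pos.mpr hz
  have heq := hG.eqOn_of_preconnected_of_eventuallyEq hH hUconv.isPreconnected h0 hfreq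
    (show ν ∈ U from hν)
  calc L p s m ν
      = Complex.Gamma (1-ν) * ((Complex.Gamma (1-ν))⁻¹ * L p s m ν) :=
        (mul_inv_cancel_left₀ hne _).symm
    _ = Complex.Gamma (1-ν) * Hc p s m ν := by rw [← heq]

lemma main_real {p s ν : ℝ} (hp : 0 < p) (hs : 0 < s) (m : ℕ) (hν : ν < m + 1)
    (hνint : ∀ n : ℕ, ν ≠ n + 1) :
    ∫ t in Ioo (0:ℝ) 1, t ^ (p - 1) * (1 - t ^ s) ^ m * (1 - t) ^ (-ν)
      = Real.Gamma (1 - ν) * ∑ r ∈ Finset.range (m + 1), (-1:ℝ) ^ r * (m.choose r : ℝ) *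
          (Real.Gamma (p + r * s) / Real.Gamma (1 + p + r * s - ν)) := by
  have hGne : Complex.Gamma (1 - (ν:ℂ)) ≠ 0 := by
    refine Complex.Gamma_ne_zero fun n => ?_
    rw [show (1 - (ν:ℂ)) = ((1 - ν : ℝ):ℂ) by push_cast; ring,
      show (-(n:ℂ)) = ((-(n:ℝ) : ℝ):ℂ) by push_cast; ring]
    intro h
    have := Complex.ofReal_inj.mp h
    exact hνint n (by linarith)
  have hkey := key hp hs m (ν := (ν:ℂ)) (by simpa using hν) hGne
  have hL : L p s m (ν:ℂ)
      = ((∫ t in Ioo (0:ℝ) 1, t ^ (p - 1) * (1 - t ^ s) ^ m * (1 - t) ^ (-ν) : ℝ) : ℂ) := by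
    rw [L, show ((∫ t in Ioo (0:ℝ) 1, t ^ (p - 1) * (1 - t ^ s) ^ m * (1 - t) ^ (-ν) : ℝ) : ℂ)
      = ∫ t in Ioo (0:ℝ) 1,
          ((t ^ (p - 1) * (1 - t ^ s) ^ m * (1 - t) ^ (-ν) : ℝ) : ℂ) from (integral_ofReal).symm]
    refine setIntegral_congr_fun measurableSet_Ioo fun t ht => ?_
    rw [F, show (-(ν:ℂ)) = ((-ν : ℝ):ℂ) by push_cast; ring,
      ← Complex.ofReal_cpow (by linarith [ht.2] : (0:ℝ) ≤ 1 - t)]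
    push_cast
    ring
  have hH : Hc p s m (ν:ℂ)
      = ((∑ r ∈ Finset.range (m + 1), (-1:ℝ) ^ r * (m.choose r : ℝ) *
          (Real.Gamma (p + r * s) / Real.Gamma (1 + p + r * s - ν)) : ℝ) : ℂ) := by
    rw [Hc, Complex.ofReal_sum]
    refine Finset.sum_congr rfl fun r _ => ?_
    rw [show (((p + r * s : ℝ) : ℂ) + 1 - (ν:ℂ)) = ((1 + p + r * s - ν : ℝ) : ℂ) by
      push_cast; ring]
    rw [Complex.Gamma_ofReal, Complex.Gamma_ofReal]
    push_cast
    ring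
  have := hkey
  rw [hL, hH, show (1 - (ν:ℂ)) = ((1 - ν : ℝ):ℂ) by push_cast; ring,
    Complex.Gamma_ofReal, ← Complex.ofReal_mul] at this
  exact Complex.ofReal_inj.mp this


lemma cov {b : ℝ} (hb : 0 < b) (g : ℝ → ℝ) :
    ∫ t in Set.Ioo (0:ℝ) 1, g t
      = ∫ x in Ioi (0:ℝ), (2 * b * Real.exp (-(2 * b * x))) * g (Real.exp (-(2 * b * x))) := by
  have himg : (fun x : ℝ => Real.exp (-(2 * b * x))) '' (Ioi 0) = Set.Ioo 0 1 := by
    ext t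
    constructor
    · rintro ⟨x, hx, rfl⟩
      have hx0 : (0:ℝ) < x := hx
      refine ⟨Real.exp_pos _, ?_⟩
      rw [Real.exp_lt_one_iff]
      nlinarith
    · rintro ⟨ht0, ht1⟩
      refine ⟨Real.log t / (-(2 * b)), ?_, ?_⟩
      · have : Real.log t < 0 := Real.log_neg ht0 ht1
        rw [Set.mem_Ioi, div_pos_iff]
        right; constructor <;> linarith
      · show Real.exp (-(2 * b * (Real.log t / (-(2 * b))))) = t
        rw [show -(2 * b * (Real.log t / (-(2 * b)))) = Real.log t by field_simp]
        exact Real.exp_log ht0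
  have hderiv : ∀ x ∈ Ioi (0:ℝ), HasDerivWithinAt (fun x : ℝ => Real.exp (-(2 * b * x)))
      (-(2 * b) * Real.exp (-(2 * b * x))) (Ioi 0) x := by
    intro x _
    have h1 : HasDerivAt (fun x : ℝ => -(2 * b * x)) (-(2 * b)) x := by
      simpa using ((hasDerivAt_id x).const_mul (2 * b)).fun_neg
    have h2 := (Real.hasDerivAt_exp (-(2 * b * x))).comp x h1
    have : HasDerivAt (fun x : ℝ => Real.exp (-(2 * b * x)))
        (-(2 * b) * Real.exp (-(2 * b * x))) x := by
      exact h2.congr_deriv (by ring)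
    exact this.hasDerivWithinAt
  have hinj : InjOn (fun x : ℝ => Real.exp (-(2 * b * x))) (Ioi 0) := by
    intro x _ y _ hxy
    have := Real.exp_injective hxy
    nlinarith [this]
  rw [← himg, integral_image_eq_integral_abs_deriv_smul measurableSet_Ioi hderiv hinj g]
  refine setIntegral_congr_fun measurableSet_Ioi fun x hx => ?_
  have hneg : -(2*b) * Real.exp (-(2*b*x)) < 0 := by
    have := Real.exp_pos (-(2*b*x)); nlinarith
  rw [smul_eq_mul, abs_of_neg hneg]
  ring


lemma pointwise {a b ν : ℝ} (ha : 0 ≤ a) (hb : 0 < b) (m : ℕ) {x : ℝ} (hx : 0 < x)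
    {p : ℝ} (hpdef : p = ν / 2 - m * a / (2 * b)) (s : ℝ)
    (hsm : (1 - Real.exp (-(2 * b * x)) ^ s) ^ m = (1 - Real.exp (-(2 * a * x))) ^ m) :
    Real.sinh (a * x) ^ m / Real.sinh (b * x) ^ ν
      = (2:ℝ) ^ (ν - (m:ℝ)) / (2 * b) *
        ((2 * b * Real.exp (-(2 * b * x))) *
          (Real.exp (-(2 * b * x)) ^ (p - 1) * (1 - Real.exp (-(2 * b * x)) ^ s) ^ m *
            (1 - Real.exp (-(2 * b * x))) ^ (-ν))) := by
  have hE : (0:ℝ) < Real.exp (-(2 * b * x)) := Real.exp_pos _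
  have hE1 : Real.exp (-(2 * b * x)) < 1 := by
    rw [Real.exp_lt_one_iff]; nlinarith
  have h1E : (0:ℝ) < 1 - Real.exp (-(2 * b * x)) := by linarith
  have hsinh_b : Real.sinh (b * x) = Real.exp (b * x) * (1 - Real.exp (-(2 * b * x))) / 2 := by
    rw [Real.sinh_eq]
    have h2 : Real.exp (b * x) * Real.exp (-(2 * b * x)) = Real.exp (-(b * x)) := by
      rw [← Real.exp_add]; ring_nf
    field_simp
    rw [show -(b * x * 2) = -(2 * b * x) by ring]
    linarith [h2]
  have hsinh_a : Real.sinh (a * x) = Real.exp (a * x) * (1 - Real.exp (-(2 * a * x))) / 2 := by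
    rw [Real.sinh_eq]
    have h2 : Real.exp (a * x) * Real.exp (-(2 * a * x)) = Real.exp (-(a * x)) := by
      rw [← Real.exp_add]; ring_nf
    field_simp
    rw [show -(a * x * 2) = -(2 * a * x) by ring]
    linarith [h2]
  have hA : Real.sinh (a * x) ^ m
      = Real.exp (a * x) ^ m * (1 - Real.exp (-(2 * a * x))) ^ m / 2 ^ m := by
    rw [hsinh_a, div_pow, mul_pow]
  have hB : Real.sinh (b * x) ^ ν
      = Real.exp (b * x * ν) * (1 - Real.exp (-(2 * b * x))) ^ ν / (2:ℝ) ^ ν := by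
    rw [hsinh_b, Real.div_rpow (by positivity) (by norm_num),
      Real.mul_rpow (Real.exp_pos _).le h1E.le, ← Real.exp_mul]
  rw [hA, hB, hsm]
  rw [show Real.exp (-(2 * b * x)) ^ (p - 1)
      = Real.exp (-(2 * b * x) * (p - 1)) from (Real.exp_mul _ _).symm]
  rw [Real.rpow_neg h1E.le, Real.rpow_sub (by norm_num : (0:ℝ) < 2), Real.rpow_natCast]
  rw [show Real.exp (a * x) ^ m = Real.exp (a * x * m) from by
    rw [← Real.rpow_natCast (Real.exp (a * x)) m, ← Real.exp_mul]]
  have hu : Real.exp (-(2 * b * x) * (p - 1))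
      = Real.exp (a * x * m) / (Real.exp (b * x * ν) * Real.exp (-(2 * b * x))) := by
    rw [eq_div_iff (by positivity), ← Real.exp_add, ← Real.exp_add]
    congr 1
    rw [hpdef]
    field_simp
    ring
  rw [hu]
  have h2ν : (0:ℝ) < (2:ℝ) ^ ν := Real.rpow_pos_of_pos (by norm_num) _
  have h1Eν : (0:ℝ) < (1 - Real.exp (-(2 * b * x))) ^ ν := Real.rpow_pos_of_pos h1E _
  field_simp


end Stmt5Aux

open Stmt5Aux in

theorem stmt_5 (m : ℕ) (a b ν : ℝ) (ha : 0 ≤ a) (hb : 0 < b)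
    (hν1 : (m : ℝ) * (a / b) < ν) (hν2 : ν < (m : ℝ) + 1) (hν0 : 0 < ν)
    (hνint : ∀ n : ℕ, ν ≠ (n : ℝ) + 1) :
    ∫ x in Set.Ioi (0:ℝ), Real.sinh (a * x) ^ m / Real.sinh (b * x) ^ ν =
      (2:ℝ) ^ (ν - (m : ℝ)) / (2 * b) * Real.Gamma (1 - ν) *
        ∑ r ∈ Finset.range (m + 1), (-1 : ℝ) ^ r * (m.choose r : ℝ) *
          (Real.Gamma (ν / 2 + (2 * (r : ℝ) - (m : ℝ)) * a / (2 * b)) /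
            Real.Gamma (1 - ν / 2 + (2 * (r : ℝ) - (m : ℝ)) * a / (2 * b))) := by
  by_cases hcase : a = 0 ∧ m ≠ 0
  · obtain ⟨ha0, hm0⟩ := hcase
    have hLHS : ∫ x in Set.Ioi (0:ℝ), Real.sinh (a * x) ^ m / Real.sinh (b * x) ^ ν
        = 0 := by
      subst ha0
      simp only [zero_mul, Real.sinh_zero, zero_pow hm0, zero_div, integral_zero]
    rw [hLHS]
    have hsum : ∑ r ∈ Finset.range (m + 1), (-1 : ℝ) ^ r * (m.choose r : ℝ) *
          (Real.Gamma (ν / 2 + (2 * (r : ℝ) - (m : ℝ)) * a / (2 * b)) /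
            Real.Gamma (1 - ν / 2 + (2 * (r : ℝ) - (m : ℝ)) * a / (2 * b)))
        = (Real.Gamma (ν / 2) / Real.Gamma (1 - ν / 2)) *
            ∑ r ∈ Finset.range (m + 1), (-1 : ℝ) ^ r * (m.choose r : ℝ) := by
      subst ha0
      rw [Finset.mul_sum]
      refine Finset.sum_congr rfl fun r _ => ?_
      rw [mul_zero, zero_div, add_zero, add_zero]
      ring
    have halt : ∑ r ∈ Finset.range (m + 1), (-1 : ℝ) ^ r * (m.choose r : ℝ) = 0 := by
      have h := Int.alternating_sum_range_choose_of_ne hm0 (n := m)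
      have h2 := congrArg (fun z : ℤ => (z : ℝ)) h
      push_cast at h2
      convert h2 using 1
    rw [hsum, halt, mul_zero, mul_zero]
  · push_neg at hcase
    set s : ℝ := if a = 0 then 1 else a / b with hs_def
    set p : ℝ := ν / 2 - m * a / (2 * b) with hp_def
    have hs : 0 < s := by
      rw [hs_def]
      split_ifs with h
      · norm_num
      · exact div_pos (lt_of_le_of_ne ha (Ne.symm h)) hb
    have hp : 0 < p := by
      rw [hp_def, sub_pos]
      have h3 : (m:ℝ) * a < ν * b := by
        rw [← mul_div_assoc] at hν1
        exact (div_lt_iff₀ hb).mp hν1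
      rw [div_lt_div_iff₀ (by positivity) (by norm_num : (0:ℝ) < 2)]
      nlinarith
    have hsm : ∀ x : ℝ, 0 < x →
        (1 - Real.exp (-(2 * b * x)) ^ s) ^ m = (1 - Real.exp (-(2 * a * x))) ^ m := by
      intro x hx
      by_cases h : a = 0
      · have hm : m = 0 := hcase h
        simp [hm]
      · rw [hs_def, if_neg h]
        congr 3
        rw [← Real.exp_mul]
        congr 1
        field_simp
    have hstep1 : ∫ x in Set.Ioi (0:ℝ), Real.sinh (a * x) ^ m / Real.sinh (b * x) ^ ν
        = ∫ x in Set.Ioi (0:ℝ), (2:ℝ) ^ (ν - (m:ℝ)) / (2 * b) *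
            ((2 * b * Real.exp (-(2 * b * x))) *
              (Real.exp (-(2 * b * x)) ^ (p - 1) * (1 - Real.exp (-(2 * b * x)) ^ s) ^ m *
                (1 - Real.exp (-(2 * b * x))) ^ (-ν))) := by
      refine setIntegral_congr_fun measurableSet_Ioi fun x hx => ?_
      exact pointwise ha hb m hx hp_def s (hsm x hx)
    rw [hstep1, MeasureTheory.integral_const_mul]
    have hcov := cov hb (fun t => t ^ (p - 1) * (1 - t ^ s) ^ m * (1 - t) ^ (-ν))
    rw [← hcov, main_real hp hs m hν2 hνint]
    rw [← mul_assoc]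
    congr 1
    refine Finset.sum_congr rfl fun r hr => ?_
    have e1 : p + r * s = ν / 2 + (2 * (r : ℝ) - (m : ℝ)) * a / (2 * b) := by
      rw [hp_def, hs_def]
      split_ifs with h
      · subst h
        have hm : m = 0 := hcase rfl
        have hr0 : r = 0 := Nat.lt_one_iff.mp (by simpa [hm] using Finset.mem_range.mp hr)
        subst hm hr0
        norm_num
      · field_simp
        ring
    have e2 : 1 + p + r * s - ν = 1 - ν / 2 + (2 * (r : ℝ) - (m : ℝ)) * a / (2 * b) := by
      rw [hp_def, hs_def]
      split_ifs with h
      · subst h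
        have hm : m = 0 := hcase rfl
        have hr0 : r = 0 := Nat.lt_one_iff.mp (by simpa [hm] using Finset.mem_range.mp hr)
        subst hm hr0
        norm_num
        ring
      · field_simp
        ring
    rw [e1, e2]
end

section
/- Let m ≥ 1 be a natural number and let a, b be real with a ≥ 0, b > 0 and m·a < b. Then ∫₀^∞ (sinh(a x))^m/sinh(b x) dx = (1/(2^m b)) · Σ_{r=0}^{m} (−1)^{r−1} · C(m,r) · ψ(1/2 + α_r), where α_r := (2r − m)·a/(2b), C(m,r) is the binomial coefficient, and ψ is the digamma function. -/
open Real MeasureTheory Set Filter Topology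


noncomputable def psiR : ℝ → ℝ := deriv (fun y : ℝ => Real.log (Real.Gamma y))

lemma logGamma_diffAt {x : ℝ} (hx : 0 < x) :
    DifferentiableAt ℝ (fun y : ℝ => Real.log (Real.Gamma y)) x := by
  refine (Real.differentiableAt_Gamma ?_).log (Real.Gamma_pos_of_pos hx).ne'
  intro n
  have : -(n:ℝ) ≤ 0 := neg_nonpos.mpr (Nat.cast_nonneg n)
  exact (lt_of_le_of_lt this hx).ne'

lemma logGamma_rec {y : ℝ} (hy : 0 < y) :
    Real.log (Real.Gamma (y + 1)) = Real.log (Real.Gamma y) + Real.log y := by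
  rw [Real.Gamma_add_one hy.ne', Real.log_mul hy.ne' (Real.Gamma_pos_of_pos hy).ne', add_comm]

lemma psiR_rec {x : ℝ} (hx : 0 < x) : psiR (x + 1) = psiR x + 1 / x := by
  unfold psiR
  rw [← deriv_comp_add_const, one_div, ← Real.deriv_log,
    ← deriv_add (logGamma_diffAt hx) (Real.differentiableAt_log hx.ne')]
  apply Filter.EventuallyEq.deriv_eq
  filter_upwards [eventually_gt_nhds hx] with y hy
  exact logGamma_rec hy

lemma psiR_shift {x : ℝ} (hx : 0 < x) (n : ℕ) :
    psiR (x + n) = psiR x + ∑ k ∈ Finset.range n, 1 / (x + k) := by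
  induction n with
  | zero => simp
  | succ n ih =>
    have h1 : x + (n + 1 : ℕ) = (x + n) + 1 := by push_cast; ring
    rw [h1, psiR_rec (by positivity), ih, Finset.sum_range_succ]
    ring

lemma psiR_le_log {x : ℝ} (hx : 0 < x) : psiR x ≤ Real.log x := by
  have h := Real.convexOn_log_Gamma.deriv_le_slope (mem_Ioi.mpr hx)
    (mem_Ioi.mpr (by linarith : (0:ℝ) < x + 1)) (by linarith) (logGamma_diffAt hx)
  rw [slope_def_field] at h
  simp only [Function.comp] at h
  calc psiR x = deriv (log ∘ Real.Gamma) x := rfl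
    _ ≤ _ := Real.convexOn_log_Gamma.deriv_le_slope (mem_Ioi.mpr hx)
        (mem_Ioi.mpr (by linarith : (0:ℝ) < x + 1)) (by linarith) (logGamma_diffAt hx)
    _ = Real.log x := by
        rw [slope_def_field]
        simp only [Function.comp_apply]
        rw [logGamma_rec hx]
        ring

lemma log_le_psiR {x : ℝ} (hx : 1 < x) : Real.log (x - 1) ≤ psiR x := by
  have hx0 : (0:ℝ) < x := by linarith
  have hx1 : (0:ℝ) < x - 1 := by linarith
  calc Real.log (x - 1) = slope (log ∘ Real.Gamma) (x - 1) x := by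
        rw [slope_def_field]
        simp only [Function.comp_apply]
        rw [show x = (x - 1) + 1 by ring, logGamma_rec hx1]
        ring_nf
    _ ≤ deriv (log ∘ Real.Gamma) x := Real.convexOn_log_Gamma.slope_le_deriv
        (mem_Ioi.mpr hx1) (mem_Ioi.mpr hx0) (by linarith) (logGamma_diffAt hx0)
    _ = psiR x := rfl

lemma tendsto_log_div_aux (c : ℝ) :
    Tendsto (fun n : ℕ => Real.log ((c + n) / n)) atTop (𝓝 0) := by
  have h1 : Tendsto (fun n : ℕ => c / n + 1) atTop (𝓝 1) := by
    simpa using (tendsto_const_div_atTop_nhds_zero_nat c).add tendsto_const_nhds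
  have h2 := ((Real.continuousAt_log one_ne_zero).tendsto.comp h1)
  rw [Real.log_one] at h2
  refine h2.congr' ?_
  filter_upwards [eventually_ge_atTop 1] with n hn
  have hn' : (n:ℝ) ≠ 0 := by positivity
  simp only [Function.comp_apply]
  rw [div_add' _ _ _ hn']
  ring_nf

lemma psiR_sub_log {x : ℝ} (hx : 0 < x) :
    Tendsto (fun n : ℕ => psiR (x + n) - Real.log n) atTop (𝓝 0) := by
  apply tendsto_of_tendsto_of_tendsto_of_le_of_le' (tendsto_log_div_aux (x - 1))
    (tendsto_log_div_aux x)
  · filter_upwards [eventually_ge_atTop 1] with n hn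
    have hn0 : (0:ℝ) < n := by exact_mod_cast hn
    have h1 : (1:ℝ) < x + n := by
      have : (1:ℝ) ≤ n := by exact_mod_cast hn
      linarith
    have h2 := log_le_psiR h1
    have h3 : Real.log ((x - 1 + n) / n) = Real.log (x + n - 1) - Real.log n := by
      rw [Real.log_div (by linarith) hn0.ne']
      ring_nf
    rw [h3]
    have : (x + ↑n - 1) = (x + ↑n) - 1 := by ring
    rw [this] at h2 ⊢
    linarith
  · filter_upwards [eventually_ge_atTop 1] with n hn
    have hn0 : (0:ℝ) < n := by exact_mod_cast hn
    have h2 := psiR_le_log (show (0:ℝ) < x + n by positivity)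
    have h3 : Real.log ((x + n) / n) = Real.log (x + n) - Real.log n :=
      Real.log_div (by positivity) hn0.ne'
    rw [h3]
    linarith


lemma int_exp_neg_mul {c : ℝ} (hc : 0 < c) :
    ∫ x in Ioi (0:ℝ), Real.exp (-(c * x)) = 1 / c := by
  have h := Real.integral_rpow_mul_exp_neg_mul_Ioi (zero_lt_one) hc
  simpa using h

lemma int_x_exp_neg_mul {c : ℝ} (hc : 0 < c) :
    ∫ x in Ioi (0:ℝ), x * Real.exp (-(c * x)) = 1 / c ^ 2 := by
  have h := Real.integral_rpow_mul_exp_neg_mul_Ioi (two_pos) hc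
  have h2 : ((2:ℝ) - 1) = 1 := by norm_num
  rw [h2] at h
  simp only [Real.rpow_one, Real.Gamma_two, mul_one] at h
  rw [show ((2:ℝ)) = ((2:ℕ):ℝ) by norm_num, Real.rpow_natCast] at h
  rw [h, div_pow]
  norm_num

lemma integrableOn_exp_neg_mul {c : ℝ} (hc : 0 < c) :
    IntegrableOn (fun x => Real.exp (-(c * x))) (Ioi (0:ℝ)) := by
  simpa [neg_mul] using exp_neg_integrableOn_Ioi 0 hc

lemma integrableOn_x_exp_neg_mul {c : ℝ} (hc : 0 < c) :
    IntegrableOn (fun x => x * Real.exp (-(c * x))) (Ioi (0:ℝ)) := by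
  refine Integrable.mono' ((integrableOn_exp_neg_mul (half_pos hc)).const_mul (2/c))
    ((continuous_id.mul (by continuity)).aestronglyMeasurable) ?_
  filter_upwards [ae_restrict_mem measurableSet_Ioi] with x hx
  have hx0 : (0:ℝ) < x := hx
  rw [Real.norm_of_nonneg (by positivity)]
  have h1 : c / 2 * x ≤ Real.exp (c / 2 * x) :=
    le_trans (by linarith [Real.add_one_le_exp (c/2*x)]) le_rfl
  calc x * Real.exp (-(c * x)) = (2/c) * ((c/2 * x) * Real.exp (-(c * x))) := by
        field_simp
      _ ≤ (2/c) * (Real.exp (c/2 * x) * Real.exp (-(c * x))) := by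
        apply mul_le_mul_of_nonneg_left
          (mul_le_mul_of_nonneg_right h1 (Real.exp_nonneg _)) (by positivity)
      _ = (2/c) * Real.exp (-(c/2 * x)) := by
        rw [← Real.exp_add]
        congr 1
        ring

lemma sinh_le_exp {t : ℝ} : Real.sinh t ≤ Real.exp t := by
  rw [Real.sinh_eq]
  have := Real.exp_pos (-t)
  have := Real.exp_pos t
  linarith

lemma sinh_le_mul_exp {t : ℝ} (ht : 0 ≤ t) : Real.sinh t ≤ t * Real.exp t := by
  rw [Real.sinh_eq]
  have h1 : Real.exp (-t) * Real.exp t = 1 := by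
    rw [← Real.exp_add]; simp
  have h2 : 1 - 2 * t ≤ Real.exp (-t) ^ 2 := by
    have := Real.add_one_le_exp (-(2*t))
    have h3 : Real.exp (-(2*t)) = Real.exp (-t) ^ 2 := by
      rw [← Real.exp_nat_mul]
      congr 1
      push_cast
      ring
    linarith
  have hu := Real.exp_pos t
  have hv := Real.exp_pos (-t)
  nlinarith [mul_le_mul_of_nonneg_left h2 hu.le]

lemma sinh_pow_le {t : ℝ} (ht : 0 ≤ t) {m : ℕ} (hm : 1 ≤ m) :
    Real.sinh t ^ m ≤ t * Real.exp ((m:ℝ) * t) := by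
  obtain ⟨j, rfl⟩ : ∃ j, m = j + 1 := ⟨m - 1, by omega⟩
  rw [pow_succ']
  calc Real.sinh t * Real.sinh t ^ j ≤ (t * Real.exp t) * Real.exp t ^ j := by
        apply mul_le_mul (sinh_le_mul_exp ht)
          (pow_le_pow_left₀ (Real.sinh_nonneg_iff.mpr ht) sinh_le_exp j)
          (pow_nonneg (Real.sinh_nonneg_iff.mpr ht) j) (by positivity)
    _ = t * Real.exp (((j:ℝ)+1) * t) := by
        rw [← Real.exp_nat_mul, mul_assoc, ← Real.exp_add]
        congr 2
        ring
  push_cast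
  ring_nf
  exact le_rfl


lemma ck_pos (m r k : ℕ) (hr : r ≤ m) {a b : ℝ} (ha : 0 ≤ a) (hb : 0 < b)
    (hab : (m:ℝ) * a < b) : 0 < (2*(k:ℝ)+1)*b - (2*(r:ℝ)-(m:ℝ))*a := by
  have h1 : (2*(r:ℝ)-m)*a ≤ (m:ℝ)*a := by
    have : (r:ℝ) ≤ m := Nat.cast_le.mpr hr
    nlinarith
  have h2 : (0:ℝ) ≤ (k:ℝ) := Nat.cast_nonneg k
  nlinarith

lemma gk_eq (m k : ℕ) (a b x : ℝ) :
    Real.sinh (a*x)^m * (2*Real.exp (-((2*(k:ℝ)+1)*b*x))) =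
    ∑ r ∈ Finset.range (m+1), (2/2^m * ((-1:ℝ)^(r+m) * (m.choose r))) *
      Real.exp (-(((2*(k:ℝ)+1)*b - (2*(r:ℝ)-(m:ℝ))*a) * x)) := by
  rw [Real.sinh_eq, div_pow, sub_pow, Finset.sum_div, Finset.sum_mul]
  refine Finset.sum_congr rfl (fun r hr => ?_)
  have hrm : r ≤ m := Nat.lt_succ_iff.mp (Finset.mem_range.mp hr)
  have hcast : ((m - r : ℕ) : ℝ) = (m:ℝ) - r := Nat.cast_sub hrm
  rw [← Real.exp_nat_mul, ← Real.exp_nat_mul, hcast]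
  have hexp : Real.exp ((r:ℝ)*(a*x)) * Real.exp (((m:ℝ)-r)*(-(a*x))) *
      Real.exp (-((2*(k:ℝ)+1)*b*x)) =
      Real.exp (-(((2*(k:ℝ)+1)*b - (2*(r:ℝ)-(m:ℝ))*a) * x)) := by
    rw [← Real.exp_add, ← Real.exp_add]; congr 1; ring
  linear_combination ((-1:ℝ)^(r+m) * (m.choose r) * 2 / 2^m) * hexp

lemma alt_sum_zero {m : ℕ} (hm : 1 ≤ m) :
    ∑ r ∈ Finset.range (m+1), (-1:ℝ)^r * (m.choose r) = 0 := by
  have h := Int.alternating_sum_range_choose_of_ne (show m ≠ 0 by omega)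
  have := congrArg (fun z : ℤ => (z : ℝ)) h
  push_cast at this
  simpa using this

lemma tsum_exp_eq {b x : ℝ} (hb : 0 < b) (hx : 0 < x) :
    ∑' k : ℕ, 2 * Real.exp (-((2*(k:ℝ)+1)*b*x)) = 1 / Real.sinh (b*x) := by
  have hbx : 0 < b * x := by positivity
  have hr0 : (0:ℝ) ≤ Real.exp (-(2*b*x)) := (Real.exp_pos _).le
  have hr1 : Real.exp (-(2*b*x)) < 1 := by
    rw [Real.exp_lt_one_iff]; nlinarith
  have h1 : ∀ k : ℕ, 2 * Real.exp (-((2*(k:ℝ)+1)*b*x)) =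
      (2 * Real.exp (-(b*x))) * (Real.exp (-(2*b*x)))^k := by
    intro k
    rw [← Real.exp_nat_mul,
      show (2:ℝ) * Real.exp (-(b*x)) * Real.exp ((k:ℝ) * -(2*b*x)) =
        2 * (Real.exp (-(b*x)) * Real.exp ((k:ℝ) * -(2*b*x))) from by ring,
      ← Real.exp_add]
    congr 2
    ring
  rw [tsum_congr h1, tsum_mul_left, tsum_geometric_of_lt_one hr0 hr1]
  have hE : Real.exp (-(b*x)) * Real.exp (b*x) = 1 := by
    rw [← Real.exp_add]; simp
  have key : 1 - Real.exp (-(2*b*x)) =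
      Real.exp (-(b*x)) * (Real.exp (b*x) - Real.exp (-(b*x))) := by
    rw [mul_sub, hE, ← Real.exp_add]
    ring_nf
  have huv : Real.exp (-(b*x)) < Real.exp (b*x) := Real.exp_lt_exp.mpr (by linarith)
  have hvne : Real.exp (-(b*x)) ≠ 0 := (Real.exp_pos _).ne'
  have hne : Real.exp (b*x) - Real.exp (-(b*x)) ≠ 0 := by
    have := huv; intro h; linarith [sub_eq_zero.mp h]
  rw [key, Real.sinh_eq]
  field_simp
theorem stmt_6 (m : ℕ) (a b : ℝ) (hm : 1 ≤ m) (ha : 0 ≤ a) (hb : 0 < b)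
    (hab : (m : ℝ) * a < b) :
    ∫ x in Set.Ioi (0:ℝ), Real.sinh (a * x) ^ m / Real.sinh (b * x) =
      1 / (2 ^ m * b) *
        ∑ r ∈ Finset.range (m + 1), (-1 : ℝ) ^ (r + 1) * (m.choose r : ℝ) *
          deriv (fun y : ℝ => Real.log (Real.Gamma y))
            (1 / 2 + (2 * (r : ℝ) - (m : ℝ)) * a / (2 * b)) := by
  set g : ℕ → ℝ → ℝ := fun k x => Real.sinh (a*x)^m * (2*Real.exp (-((2*(k:ℝ)+1)*b*x))) with hg
  set w : ℕ → ℝ := fun r => 2/2^m * ((-1:ℝ)^(r+m) * (m.choose r)) with hw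
  set c : ℕ → ℕ → ℝ := fun k r => (2*(k:ℝ)+1)*b - (2*(r:ℝ)-(m:ℝ))*a with hc
  have hcpos : ∀ k r, r ≤ m → 0 < c k r := fun k r hr => ck_pos m r k hr ha hb hab
  have hgsum : ∀ k, (g k) = fun x => ∑ r ∈ Finset.range (m+1), w r * Real.exp (-(c k r * x)) := by
    intro k; funext x
    simp only [hg, hw, hc]
    exact gk_eq m k a b x
  have hgint : ∀ k, IntegrableOn (g k) (Set.Ioi 0) := by
    intro k
    rw [hgsum k]
    apply integrable_finset_sum
    intro r hr
    exact (integrableOn_exp_neg_mul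
      (hcpos k r (Nat.lt_succ_iff.mp (Finset.mem_range.mp hr)))).const_mul _
  set S : ℕ → ℝ := fun k => ∫ x in Set.Ioi (0:ℝ), g k x with hS
  have hSval : ∀ k, S k = ∑ r ∈ Finset.range (m+1), w r * (1 / c k r) := by
    intro k
    simp only [hS]
    rw [hgsum k]
    rw [MeasureTheory.integral_finset_sum _ (fun r hr => (integrableOn_exp_neg_mul
      (hcpos k r (Nat.lt_succ_iff.mp (Finset.mem_range.mp hr)))).const_mul _)]
    refine Finset.sum_congr rfl fun r hr => ?_
    rw [MeasureTheory.integral_const_mul _ _,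
      int_exp_neg_mul (hcpos k r (Nat.lt_succ_iff.mp (Finset.mem_range.mp hr)))]
  have hgpos : ∀ k x, 0 < x → 0 ≤ g k x := by
    intro k x hx
    simp only [hg]
    have h1 : 0 ≤ Real.sinh (a*x) := Real.sinh_nonneg_iff.mpr (by positivity)
    have h2 : 0 ≤ 2*Real.exp (-((2*(k:ℝ)+1)*b*x)) := by positivity
    exact mul_nonneg (pow_nonneg h1 m) h2
  have hSnonneg : ∀ k, 0 ≤ S k := by
    intro k
    exact MeasureTheory.setIntegral_nonneg measurableSet_Ioi (fun x hx => hgpos k x hx)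
  set c' : ℕ → ℝ := fun k => (2*(k:ℝ)+1)*b - (m:ℝ)*a with hc'
  have hc'pos : ∀ k, 0 < c' k := by
    intro k
    have h := ck_pos m m k le_rfl ha hb hab
    have h2 : (2*(m:ℝ)-(m:ℝ)) = (m:ℝ) := by ring
    rw [h2] at h
    simpa only [hc'] using h
  have hSle : ∀ k, S k ≤ 2*a * (1/(c' k)^2) := by
    intro k
    have hint2 : IntegrableOn (fun x => (2*a)*(x * Real.exp (-(c' k * x)))) (Set.Ioi 0) :=
      (integrableOn_x_exp_neg_mul (hc'pos k)).const_mul _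
    have hmono : S k ≤ ∫ x in Set.Ioi (0:ℝ), (2*a)*(x*Real.exp (-(c' k * x))) := by
      apply MeasureTheory.setIntegral_mono_on (hgint k) hint2 measurableSet_Ioi
      intro x hx
      have hx0 : (0:ℝ) < x := hx
      have h1 : Real.sinh (a*x)^m ≤ (a*x) * Real.exp ((m:ℝ)*(a*x)) :=
        sinh_pow_le (by positivity) hm
      have h3 : Real.exp ((m:ℝ)*(a*x)) * Real.exp (-((2*(k:ℝ)+1)*b*x)) =
          Real.exp (-(c' k * x)) := by
        rw [← Real.exp_add]
        congr 1
        simp only [hc']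
        ring
      calc g k x ≤ ((a*x) * Real.exp ((m:ℝ)*(a*x))) * (2*Real.exp (-((2*(k:ℝ)+1)*b*x))) := by
            simp only [hg]
            exact mul_le_mul_of_nonneg_right h1 (by positivity)
        _ = (2*a)*(x * Real.exp (-(c' k * x))) := by linear_combination (2*a*x) * h3
    calc S k ≤ _ := hmono
      _ = 2*a * (1/(c' k)^2) := by
        rw [MeasureTheory.integral_const_mul _ _, int_x_exp_neg_mul (hc'pos k)]
  have hd0 : (0:ℝ) < b - m*a := by linarith
  have hbound_sum : Summable (fun k : ℕ => 2*a*(1/(c' k)^2)) := by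
    have h0 : Summable (fun n : ℕ => 1/((n:ℝ))^2) :=
      Real.summable_one_div_nat_pow.mpr (by norm_num)
    have h1 : Summable (fun n : ℕ => 1/(((n:ℕ):ℝ)+1)^2) := by
      have := (summable_nat_add_iff 1).mpr h0
      refine this.congr fun n => ?_
      push_cast
      ring
    have base : Summable (fun k : ℕ => (2*a/(b - m*a)^2) * (1/((k:ℝ)+1)^2)) :=
      h1.mul_left _
    refine Summable.of_nonneg_of_le (fun k => by positivity) (fun k => ?_) base
    have hck : ((k:ℝ)+1) * (b - m*a) ≤ c' k := by
      simp only [hc']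
      have hk0 : (0:ℝ) ≤ (k:ℝ) := Nat.cast_nonneg k
      have hkb : (0:ℝ) ≤ (k:ℝ) * (b + (m:ℝ)*a) := mul_nonneg hk0 (by positivity)
      nlinarith [hkb]
    have hsq : (((k:ℝ)+1) * (b - m*a))^2 ≤ (c' k)^2 := by
      apply pow_le_pow_left₀ (by positivity) hck
    have h2 : 1/(c' k)^2 ≤ 1/((((k:ℝ)+1) * (b - m*a))^2) :=
      one_div_le_one_div_of_le (by positivity) hsq
    calc 2*a*(1/(c' k)^2) ≤ 2*a*(1/((((k:ℝ)+1) * (b - m*a))^2)) :=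
          mul_le_mul_of_nonneg_left h2 (by positivity)
      _ = (2*a/(b - m*a)^2) * (1/((k:ℝ)+1)^2) := by
          rw [mul_pow]
          have hk1 : ((k:ℝ)+1) ≠ 0 := by positivity
          field_simp
          all_goals first
          | ring1
          | exact Or.inl (by ring)
  have hSsummable : Summable S := Summable.of_nonneg_of_le hSnonneg hSle hbound_sum
  have hswap : ∫ x in Set.Ioi (0:ℝ), Real.sinh (a * x) ^ m / Real.sinh (b * x) = ∑' k, S k := by
    simp only [hS]
    have hmeas : ∀ k : ℕ, AEStronglyMeasurable (g k) (volume.restrict (Set.Ioi 0)) := by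
      intro k
      simp only [hg]
      exact (((Real.continuous_sinh.comp (continuous_const.mul continuous_id)).pow m).mul
        (continuous_const.mul (Real.continuous_exp.comp
          ((continuous_const.mul continuous_id).neg)))).aestronglyMeasurable
    have hfin : ∑' k : ℕ, ∫⁻ x in Set.Ioi (0:ℝ), ‖g k x‖₊ ≠ ⊤ := by
      have heq : ∀ k : ℕ, ∫⁻ x in Set.Ioi (0:ℝ), ‖g k x‖₊ = ENNReal.ofReal (S k) := by
        intro k
        simp only [← enorm_eq_nnnorm]
        rw [← MeasureTheory.ofReal_integral_norm_eq_lintegral_enorm (hgint k)]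
        congr 1
        simp only [hS]
        apply MeasureTheory.setIntegral_congr_fun measurableSet_Ioi
        intro x hx
        exact Real.norm_of_nonneg (hgpos k x hx)
      rw [tsum_congr heq, ← ENNReal.ofReal_tsum_of_nonneg hSnonneg hSsummable]
      exact ENNReal.ofReal_ne_top
    rw [← MeasureTheory.integral_tsum hmeas hfin]
    apply MeasureTheory.setIntegral_congr_fun measurableSet_Ioi
    intro x hx
    have hx0 : (0:ℝ) < x := hx
    calc Real.sinh (a*x)^m / Real.sinh (b*x)
        = Real.sinh (a*x)^m * (1/Real.sinh (b*x)) := by ring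
      _ = Real.sinh (a*x)^m * ∑' k : ℕ, 2*Real.exp (-((2*(k:ℝ)+1)*b*x)) := by
          rw [tsum_exp_eq hb hx0]
      _ = ∑' k, g k x := by
          simp only [hg]
          exact (tsum_mul_left).symm
  set xr : ℕ → ℝ := fun r => 1/2 + (2*(r:ℝ) - m)*a/(2*b) with hxr
  have hden : ∀ (k r : ℕ), xr r + k = ((2*(k:ℝ)+1)*b + (2*(r:ℝ)-m)*a)/(2*b) := by
    intro k r
    simp only [hxr]
    field_simp
    ring
  have hnum_pos : ∀ (k r : ℕ), r ≤ m → 0 < (2*(k:ℝ)+1)*b + (2*(r:ℝ)-m)*a := by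
    intro k r hr
    have h1 : -((m:ℝ)*a) ≤ (2*(r:ℝ)-m)*a := by nlinarith [(Nat.cast_nonneg r : (0:ℝ) ≤ r), ha]
    have h2 : b ≤ (2*(k:ℝ)+1)*b := by nlinarith [(Nat.cast_nonneg k : (0:ℝ) ≤ k)]
    linarith
  have hxrk_pos : ∀ (k r : ℕ), r ≤ m → 0 < xr r + k := by
    intro k r hr
    rw [hden k r]
    exact div_pos (hnum_pos k r hr) (by linarith)
  set U : ℕ → ℝ := fun k => ∑ r ∈ Finset.range (m+1),
    (-1:ℝ)^r * (m.choose r) * (1/(xr r + k)) with hU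
  have hSU : ∀ k, S k = 1/(2^m*b) * U k := by
    intro k
    rw [hSval k]
    simp only [hU]
    rw [← Finset.sum_range_reflect (fun r => w r * (1/c k r)) (m+1)]
    rw [Finset.mul_sum]
    refine Finset.sum_congr rfl fun j hj => ?_
    have hjm : j ≤ m := Nat.lt_succ_iff.mp (Finset.mem_range.mp hj)
    simp only [Nat.add_sub_cancel]
    have hcast : ((m - j : ℕ):ℝ) = (m:ℝ) - j := Nat.cast_sub hjm
    have hsign : (-1:ℝ)^(m - j + m) = (-1)^j := by
      calc (-1:ℝ)^(m-j+m) = (-1)^(m-j+m) * (((-1:ℝ)^2)^j) := by norm_num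
        _ = (-1)^(m-j+m+2*j) := by rw [← pow_mul, ← pow_add]
        _ = (-1)^(2*m+j) := by rw [show m-j+m+2*j = 2*m+j from by omega]
        _ = (-1)^j := by rw [pow_add, pow_mul]; norm_num
    have hchoose : (m.choose (m - j)) = m.choose j := Nat.choose_symm hjm
    have hdenc : c k (m - j) = (2*(k:ℝ)+1)*b + (2*(j:ℝ)-m)*a := by
      simp only [hc, hcast]
      ring
    simp only [hw, hsign, hchoose, hdenc, hden k j]
    have hD : 0 < (2*(k:ℝ)+1)*b + (2*(j:ℝ)-m)*a := hnum_pos k j hjm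
    have h2m : (0:ℝ) < 2^m := by positivity
    field_simp
  have hUS : ∀ k, U k = (2^m * b) * S k := by
    intro k
    rw [hSU k]
    field_simp
  have hUsummable : Summable U := (hSsummable.mul_left ((2:ℝ)^m * b)).congr
    (fun k => (hUS k).symm)
  set T : ℝ := ∑ r ∈ Finset.range (m+1), (-1:ℝ)^(r+1) * (m.choose r) * psiR (xr r) with hT
  have hpartial : ∀ n : ℕ, ∑ k ∈ Finset.range n, U k =
      (∑ r ∈ Finset.range (m+1), (-1:ℝ)^r * (m.choose r) * psiR (xr r + n)) + T := by
    intro n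
    simp only [hU]
    rw [Finset.sum_comm]
    rw [hT, ← Finset.sum_add_distrib]
    refine Finset.sum_congr rfl fun r hr => ?_
    have hrm : r ≤ m := Nat.lt_succ_iff.mp (Finset.mem_range.mp hr)
    have h0 : 0 < xr r := by
      have := hxrk_pos 0 r hrm
      simpa using this
    have hshift := psiR_shift h0 n
    rw [← Finset.mul_sum]
    have hsum : ∑ k ∈ Finset.range n, 1/(xr r + (k:ℝ)) = psiR (xr r + n) - psiR (xr r) := by
      rw [hshift]; ring
    rw [hsum]
    ring
  have hE0 : Tendsto (fun n : ℕ => ∑ r ∈ Finset.range (m+1),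
      (-1:ℝ)^r * (m.choose r) * psiR (xr r + n)) atTop (𝓝 0) := by
    have heq : ∀ n : ℕ, ∑ r ∈ Finset.range (m+1), (-1:ℝ)^r * (m.choose r) * psiR (xr r + n)
        = ∑ r ∈ Finset.range (m+1),
          ((-1:ℝ)^r * (m.choose r)) * (psiR (xr r + n) - Real.log n) := by
      intro n
      simp only [mul_sub]
      rw [Finset.sum_sub_distrib, ← Finset.sum_mul, alt_sum_zero hm, zero_mul, sub_zero]
    rw [funext heq]
    have h2 : Tendsto (fun n : ℕ => ∑ r ∈ Finset.range (m+1),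
        ((-1:ℝ)^r * (m.choose r)) * (psiR (xr r + n) - Real.log n)) atTop
        (𝓝 (∑ r ∈ Finset.range (m+1), ((-1:ℝ)^r * (m.choose r)) * 0)) := by
      apply tendsto_finset_sum
      intro r hr
      have hrm : r ≤ m := Nat.lt_succ_iff.mp (Finset.mem_range.mp hr)
      have h0 : 0 < xr r := by
        have := hxrk_pos 0 r hrm
        simpa using this
      exact (psiR_sub_log h0).const_mul _
    simpa using h2
  have htsumU : ∑' k, U k = T := by
    have h1 := hUsummable.hasSum.tendsto_sum_nat
    have h2 : Tendsto (fun n : ℕ => ∑ k ∈ Finset.range n, U k) atTop (𝓝 (0 + T)) := by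
      rw [funext hpartial]
      exact hE0.add tendsto_const_nhds
    rw [zero_add] at h2
    exact tendsto_nhds_unique h1 h2
  rw [hswap]
  calc ∑' k, S k = ∑' k, 1/(2^m*b) * U k := tsum_congr hSU
    _ = 1/(2^m*b) * ∑' k, U k := tsum_mul_left
    _ = 1/(2^m*b) * T := by rw [htsumU]
    _ = _ := by
        rw [hT]
        simp only [psiR, hxr]
end

section
/- For all real a, b, μ with 0 ≤ a < b and μ > 1, the integral ∫₀^∞ x^{μ−1} · cosh(a x)/sinh(b x) dx equals (Γ(μ)/(2b)^μ) · (ζ(μ, (b−a)/(2b)) + ζ(μ, (b+a)/(2b))), where ζ(s, q) := Σ_{n=0}^{∞} 1/(n+q)^s is the Hurwitz zeta series. -/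
open Real MeasureTheory

private lemma hasSum_elim' {M : Type*} [AddCommMonoid M] [TopologicalSpace M] [ContinuousAdd M]
    {f g : ℕ → M} {x y : M} (hf : HasSum f x) (hg : HasSum g y) :
    HasSum (Sum.elim f g : ℕ ⊕ ℕ → M) (x + y) := by
  apply HasSum.add_isCompl (Set.isCompl_range_inl_range_inr)
  · exact (Equiv.ofInjective Sum.inl Sum.inl_injective).hasSum_iff.mp hf
  · exact (Equiv.ofInjective Sum.inr Sum.inr_injective).hasSum_iff.mp hg

theorem stmt_12 (a b μ : ℝ) (ha : 0 ≤ a) (hab : a < b) (hμ : 1 < μ) :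
    ∫ x in Set.Ioi (0:ℝ), x ^ (μ - 1) * (Real.cosh (a * x) / Real.sinh (b * x)) =
      Real.Gamma μ / (2 * b) ^ μ *
        ((∑' n : ℕ, ((n : ℝ) + (b - a) / (2 * b)) ^ (-μ)) +
          ∑' n : ℕ, ((n : ℝ) + (b + a) / (2 * b)) ^ (-μ)) := by
  have hb : 0 < b := lt_of_le_of_lt ha hab
  have h2b : 0 < 2 * b := by linarith
  set q₁ : ℝ := (b - a) / (2 * b) with hq₁def
  set q₂ : ℝ := (b + a) / (2 * b) with hq₂def
  have hq₁ : 0 < q₁ := div_pos (by linarith) h2b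
  have hq₂ : 0 < q₂ := div_pos (by linarith) h2b
  have h2bq₁ : 2 * b * q₁ = b - a := by rw [hq₁def]; field_simp
  have h2bq₂ : 2 * b * q₂ = b + a := by rw [hq₂def]; field_simp
  set p : ℕ ⊕ ℕ → ℝ := Sum.elim (fun n : ℕ => 2 * b * (n + q₁)) (fun n : ℕ => 2 * b * (n + q₂))
    with hpdef
  have hppos : ∀ i, 0 < p i := by
    rintro (n | n) <;> exact mul_pos h2b (by positivity)
  set F : ℝ → ℂ := fun t => ((Real.cosh (a * t) / Real.sinh (b * t) : ℝ) : ℂ) with hFdef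
  -- geometric series
  have geo : ∀ (q t : ℝ), 0 < t →
      HasSum (fun n : ℕ => rexp (-(2 * b * ((n : ℝ) + q)) * t))
        (rexp (-(2 * b * q * t)) / (1 - rexp (-(2 * b * t)))) := by
    intro q t ht
    have hr0 : 0 ≤ rexp (-(2 * b * t)) := (exp_pos _).le
    have hr1 : rexp (-(2 * b * t)) < 1 := exp_lt_one_iff.mpr (by nlinarith)
    have H := (hasSum_geometric_of_lt_one hr0 hr1).mul_left (rexp (-(2 * b * q * t)))
    have heq : (fun n : ℕ => rexp (-(2 * b * ((n : ℝ) + q)) * t)) =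
        fun n : ℕ => rexp (-(2 * b * q * t)) * rexp (-(2 * b * t)) ^ n := by
      funext n
      rw [← Real.exp_nat_mul, ← Real.exp_add]
      congr 1
      ring
    rw [heq, div_eq_mul_inv]
    exact H
  -- pointwise sum identity
  have hF : ∀ t ∈ Set.Ioi (0:ℝ), HasSum (fun i => (1:ℂ) * (rexp (-p i * t) : ℝ)) (F t) := by
    intro t ht
    simp only [Set.mem_Ioi] at ht
    simp only [one_mul, hFdef]
    apply Complex.hasSum_ofReal.mpr
    have h1 := geo q₁ t ht
    have h2 := geo q₂ t ht
    have hcomb := hasSum_elim' h1 h2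
    have hfun : (Sum.elim (fun n : ℕ => rexp (-(2 * b * ((n : ℝ) + q₁)) * t))
        (fun n : ℕ => rexp (-(2 * b * ((n : ℝ) + q₂)) * t))) = fun i => rexp (-p i * t) := by
      funext i
      rcases i with n | n <;> rfl
    rw [hfun] at hcomb
    -- now identify the sum value
    have hval : rexp (-(2 * b * q₁ * t)) / (1 - rexp (-(2 * b * t))) +
        rexp (-(2 * b * q₂ * t)) / (1 - rexp (-(2 * b * t))) =
        Real.cosh (a * t) / Real.sinh (b * t) := by
      rw [h2bq₁, h2bq₂]
      have hr1 : rexp (-(2 * b * t)) < 1 := exp_lt_one_iff.mpr (by nlinarith)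
      have h1r : (0:ℝ) < 1 - rexp (-(2 * b * t)) := by linarith
      have hsinh : 0 < Real.sinh (b * t) := by
        rw [Real.sinh_pos_iff]; positivity
      rw [Real.cosh_eq, Real.sinh_eq, ← add_div]
      have key : (rexp (-((b - a) * t)) + rexp (-((b + a) * t))) *
          (rexp (b * t) - rexp (-(b * t))) =
          (rexp (a * t) + rexp (-(a * t))) * (1 - rexp (-(2 * b * t))) := by
        have e : ∀ x y : ℝ, rexp x * rexp y = rexp (x + y) := fun x y => (Real.exp_add x y).symm
        simp only [sub_mul, mul_sub, add_mul, mul_add, mul_one, one_mul, e]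
        ring_nf
      have hsinh' : 0 < rexp (b * t) - rexp (-(b * t)) := by
        have := hsinh; rw [Real.sinh_eq] at this; linarith
      rw [div_eq_div_iff h1r.ne' (div_pos hsinh' two_pos).ne']
      nlinarith [key]
    rw [← hval]
    exact hcomb
  -- summability
  have comp : ∀ q : ℝ, 0 < q → Summable (fun n : ℕ => 1 / (2 * b * ((n : ℝ) + q)) ^ μ) := by
    intro q hq
    have h := (Real.summable_one_div_nat_add_rpow q μ).mpr hμ
    have h2 : Summable (fun n : ℕ => 1 / ((n : ℝ) + q) ^ μ) := by
      apply h.congr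
      intro n
      rw [abs_of_pos (by positivity)]
    have h3 := h2.mul_left (((2 * b) ^ μ)⁻¹)
    apply h3.congr
    intro n
    rw [Real.mul_rpow h2b.le (by positivity)]
    field_simp
  have hsummable : ∀ q : ℝ, 0 < q →
      Summable (fun n : ℕ => Real.Gamma μ / (2 * b * ((n : ℝ) + q)) ^ μ) := by
    intro q hq
    apply ((comp q hq).mul_left (Real.Gamma μ)).congr
    intro n
    rw [mul_one_div]
  have h_sum : Summable fun i => ‖(1:ℂ)‖ / p i ^ (μ:ℂ).re := by
    simp only [norm_one, Complex.ofReal_re]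
    have := hasSum_elim' (comp q₁ hq₁).hasSum (comp q₂ hq₂).hasSum
    apply this.summable.congr
    rintro (n | n) <;> rfl
  have hs : 0 < (μ:ℂ).re := by simp only [Complex.ofReal_re]; linarith
  have H := hasSum_mellin (a := fun _ : ℕ ⊕ ℕ => (1:ℂ)) (p := p) (F := F) (s := (μ:ℂ))
    (fun i => Or.inr (hppos i)) hs hF h_sum
  -- rewrite terms of H as coercions of reals
  have hcoe : ∀ i, (((Real.Gamma μ / p i ^ μ : ℝ)) : ℂ) =
      Complex.Gamma (μ:ℂ) * 1 / (p i : ℂ) ^ (μ:ℂ) := by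
    intro i
    rw [mul_one, ← Complex.ofReal_cpow (hppos i).le, Complex.Gamma_ofReal,
      ← Complex.ofReal_div]
  rw [show (fun i => Complex.Gamma (μ:ℂ) * 1 / (p i : ℂ) ^ (μ:ℂ)) =
      fun i => (((Real.Gamma μ / p i ^ μ : ℝ)) : ℂ) from funext fun i => (hcoe i).symm] at H
  -- real HasSum for the RHS
  set T₁ : ℝ := ∑' n : ℕ, Real.Gamma μ / (2 * b * ((n : ℝ) + q₁)) ^ μ with hT₁
  set T₂ : ℝ := ∑' n : ℕ, Real.Gamma μ / (2 * b * ((n : ℝ) + q₂)) ^ μ with hT₂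
  have hGR : HasSum (fun i => Real.Gamma μ / p i ^ μ) (T₁ + T₂) := by
    have h := hasSum_elim' (hsummable q₁ hq₁).hasSum (hsummable q₂ hq₂).hasSum
    have hfun : (fun i => Real.Gamma μ / p i ^ μ) =
        Sum.elim (fun n : ℕ => Real.Gamma μ / (2 * b * ((n : ℝ) + q₁)) ^ μ)
          (fun n : ℕ => Real.Gamma μ / (2 * b * ((n : ℝ) + q₂)) ^ μ) := by
      funext i; rcases i with n | n <;> rfl
    rw [hfun]
    exact h
  have hmell : mellin F (μ:ℂ) = ((T₁ + T₂ : ℝ) : ℂ) :=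
    H.unique (Complex.hasSum_ofReal.mpr hGR)
  -- mellin = the integral
  have hint : mellin F (μ:ℂ) =
      ((∫ x in Set.Ioi (0:ℝ), x ^ (μ - 1) * (Real.cosh (a * x) / Real.sinh (b * x)) : ℝ) : ℂ) := by
    have hptwise : ∀ t ∈ Set.Ioi (0:ℝ), (t:ℂ) ^ ((μ:ℂ) - 1) • F t
        = ((t ^ (μ - 1) * (Real.cosh (a * t) / Real.sinh (b * t)) : ℝ) : ℂ) := by
      intro t ht
      have ht' : (0:ℝ) < t := ht
      simp only [hFdef, smul_eq_mul]
      rw [show ((μ:ℂ) - 1) = ((μ - 1 : ℝ) : ℂ) by push_cast; ring]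
      rw [← Complex.ofReal_cpow ht'.le, ← Complex.ofReal_mul]
    calc mellin F (μ:ℂ)
        = ∫ t in Set.Ioi (0:ℝ),
            ((t ^ (μ - 1) * (Real.cosh (a * t) / Real.sinh (b * t)) : ℝ) : ℂ) :=
          setIntegral_congr_fun measurableSet_Ioi hptwise
      _ = _ := integral_ofReal
  have hmain : (∫ x in Set.Ioi (0:ℝ), x ^ (μ - 1) * (Real.cosh (a * x) / Real.sinh (b * x)))
      = T₁ + T₂ := by
    have := hint.symm.trans hmell
    exact_mod_cast this
  rw [hmain]
  -- final algebra on the tsums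
  have hterm : ∀ q : ℝ, 0 < q → ∀ n : ℕ,
      Real.Gamma μ / (2 * b * ((n : ℝ) + q)) ^ μ =
        Real.Gamma μ / (2 * b) ^ μ * ((n : ℝ) + q) ^ (-μ) := by
    intro q hq n
    rw [Real.mul_rpow h2b.le (by positivity), Real.rpow_neg (by positivity),
      div_mul_eq_div_div, div_eq_mul_inv (Real.Gamma μ / _)]
  have hT₁' : T₁ = Real.Gamma μ / (2 * b) ^ μ * ∑' n : ℕ, ((n : ℝ) + q₁) ^ (-μ) := by
    rw [hT₁, ← tsum_mul_left]
    exact tsum_congr (hterm q₁ hq₁)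
  have hT₂' : T₂ = Real.Gamma μ / (2 * b) ^ μ * ∑' n : ℕ, ((n : ℝ) + q₂) ^ (-μ) := by
    rw [hT₂, ← tsum_mul_left]
    exact tsum_congr (hterm q₂ hq₂)
  rw [hT₁', hT₂', mul_add]
end

section
/- For all real a, b, μ with 0 ≤ a < b and μ > 0, the integral ∫₀^∞ x^{μ−1} · sinh(a x)/sinh(b x) dx equals (Γ(μ)/(2b)^μ) · Σ_{n=0}^{∞} [ (n + (b−a)/(2b))^{−μ} − (n + (b+a)/(2b))^{−μ} ], the series being absolutely convergent. -/
open Real MeasureTheory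

/-- tangent-line bound for the convex function `t ↦ t ^ (-μ)`. -/
lemma key_ineq {x y μ : ℝ} (hx : 0 < x) (hxy : x ≤ y) (hμ : 0 < μ) :
    x ^ (-μ) - y ^ (-μ) ≤ μ * x ^ (-(μ + 1)) * (y - x) := by
  have hy : 0 < y := hx.trans_le hxy
  have h0 : (0:ℝ) ∉ Set.uIcc x y := by
    rw [Set.uIcc_of_le hxy]
    intro h
    exact absurd (Set.mem_Icc.1 h).1 (not_le.2 hx)
  have hI : ∫ t in x..y, t ^ (-μ - 1) =
      (y ^ (-μ) - x ^ (-μ)) / (-μ) := by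
    rw [integral_rpow (Or.inr ⟨by intro h; exact hμ.ne' (by linarith), h0⟩)]
    norm_num
  have hf : IntervalIntegrable (fun t : ℝ => t ^ (-μ - 1)) volume x y :=
    intervalIntegral.intervalIntegrable_rpow (Or.inr h0)
  have hg : IntervalIntegrable (fun _ : ℝ => x ^ (-μ - 1)) volume x y :=
    intervalIntegrable_const
  have hmono : ∫ t in x..y, t ^ (-μ - 1) ≤ ∫ _ in x..y, x ^ (-μ - 1) := by
    apply intervalIntegral.integral_mono_on hxy hf hg
    intro t ht
    exact Real.rpow_le_rpow_of_nonpos hx ht.1 (by linarith)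
  rw [intervalIntegral.integral_const, smul_eq_mul] at hmono
  rw [hI] at hmono
  have hμne : μ ≠ 0 := hμ.ne'
  have h2 : μ * ((y ^ (-μ) - x ^ (-μ)) / -μ) = x ^ (-μ) - y ^ (-μ) := by
    rw [div_neg, mul_neg, ← mul_div_assoc, mul_comm μ, mul_div_assoc, div_self hμne,
      mul_one]
    ring
  have : x ^ (-μ) - y ^ (-μ) ≤ μ * ((y - x) * x ^ (-μ - 1)) := by
    have h3 := mul_le_mul_of_nonneg_left hmono hμ.le
    linarith [h3, h2]
  calc x ^ (-μ) - y ^ (-μ) ≤ μ * ((y - x) * x ^ (-μ - 1)) := this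
    _ = μ * x ^ (-(μ + 1)) * (y - x) := by rw [show -(μ+1) = -μ - 1 by ring]; ring

lemma hasSum_term (a b μ : ℝ) (ha : 0 ≤ a) (hab : a < b) {x : ℝ} (hx : 0 < x) :
    HasSum (fun n : ℕ =>
        x ^ (μ - 1) * Real.exp (-((2 * n * b + (b - a)) * x)) -
          x ^ (μ - 1) * Real.exp (-((2 * n * b + (b + a)) * x)))
      (x ^ (μ - 1) * (Real.sinh (a * x) / Real.sinh (b * x))) := by
  have hb : 0 < b := ha.trans_lt hab
  set r := Real.exp (-(2 * b * x)) with hr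
  have hr0 : 0 ≤ r := (Real.exp_pos _).le
  have hr1 : r < 1 := by
    rw [hr, Real.exp_lt_one_iff]
    nlinarith
  have hgeo := hasSum_geometric_of_lt_one hr0 hr1
  have h1 := ((hgeo.mul_right (Real.exp (-((b - a) * x)))).sub
      (hgeo.mul_right (Real.exp (-((b + a) * x))))).mul_left (x ^ (μ - 1))
  convert h1 using 2 with n
  · rfl
  · rw [hr, ← Real.exp_nat_mul, ← Real.exp_add, ← Real.exp_add, mul_sub]
    ring_nf
  · have hsb : 0 < Real.sinh (b * x) := by
      rw [Real.sinh_pos_iff]; positivity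
    have h1r : 0 < 1 - r := by linarith
    have e1 : Real.exp (-((b - a) * x)) * Real.exp (b * x) = Real.exp (a * x) := by
      rw [← Real.exp_add]; ring_nf
    have e2 : Real.exp (-((b + a) * x)) * Real.exp (b * x) = Real.exp (-(a * x)) := by
      rw [← Real.exp_add]; ring_nf
    have e3 : Real.exp (-(2 * b * x)) * Real.exp (b * x) = Real.exp (-(b * x)) := by
      rw [← Real.exp_add]; ring_nf
    have key : Real.sinh (a * x) * (1 - r) =
        (Real.exp (-((b - a) * x)) - Real.exp (-((b + a) * x))) * Real.sinh (b * x) := by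
      rw [Real.sinh_eq, Real.sinh_eq, hr, ← e1, ← e2, ← e3]
      ring
    rw [← mul_sub, eq_comm, inv_mul_eq_div, eq_comm,
      div_eq_div_iff hsb.ne' h1r.ne']
    exact key

theorem stmt_13 (a b μ : ℝ) (ha : 0 ≤ a) (hab : a < b) (hμ : 0 < μ) :
    Summable (fun n : ℕ =>
        ((n : ℝ) + (b - a) / (2 * b)) ^ (-μ) - ((n : ℝ) + (b + a) / (2 * b)) ^ (-μ)) ∧
    ∫ x in Set.Ioi (0:ℝ), x ^ (μ - 1) * (Real.sinh (a * x) / Real.sinh (b * x)) =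
      Real.Gamma μ / (2 * b) ^ μ *
        ∑' n : ℕ,
          (((n : ℝ) + (b - a) / (2 * b)) ^ (-μ) - ((n : ℝ) + (b + a) / (2 * b)) ^ (-μ)) := by
  have hb : 0 < b := ha.trans_lt hab
  set c1 : ℕ → ℝ := fun n => 2 * n * b + (b - a) with hc1def
  set c2 : ℕ → ℝ := fun n => 2 * n * b + (b + a) with hc2def
  have hc1 : ∀ n, 0 < c1 n := fun n => by
    have : (0:ℝ) ≤ (n:ℝ) := Nat.cast_nonneg n
    simp only [hc1def]; nlinarith
  have hc2 : ∀ n, 0 < c2 n := fun n => by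
    have : (0:ℝ) ≤ (n:ℝ) := Nat.cast_nonneg n
    simp only [hc2def]; nlinarith
  have hc12 : ∀ n, c1 n ≤ c2 n := fun n => by simp only [hc1def, hc2def]; nlinarith
  -- integrability of each piece
  have hint : ∀ c : ℝ, 0 < c →
      IntegrableOn (fun x : ℝ => x ^ (μ - 1) * Real.exp (-(c * x))) (Set.Ioi 0) := by
    intro c hc
    have h := integrableOn_rpow_mul_exp_neg_mul_rpow
      (show (-1:ℝ) < μ - 1 by linarith) (by norm_num : (0:ℝ) < 1) hc
    refine h.congr_fun (fun x hx => ?_) measurableSet_Ioi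
    simp only [Real.rpow_one]
    ring_nf
  set F : ℕ → ℝ → ℝ := fun n x =>
    x ^ (μ - 1) * Real.exp (-(c1 n * x)) - x ^ (μ - 1) * Real.exp (-(c2 n * x)) with hFdef
  have hFint : ∀ n, Integrable (F n) (volume.restrict (Set.Ioi 0)) := fun n =>
    (hint _ (hc1 n)).sub (hint _ (hc2 n))
  have hFval : ∀ n, ∫ x in Set.Ioi (0:ℝ), F n x =
      Real.Gamma μ * ((c1 n) ^ (-μ) - (c2 n) ^ (-μ)) := by
    intro n
    rw [hFdef]
    rw [integral_sub (hint _ (hc1 n)) (hint _ (hc2 n)),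
      Real.integral_rpow_mul_exp_neg_mul_Ioi hμ (hc1 n),
      Real.integral_rpow_mul_exp_neg_mul_Ioi hμ (hc2 n),
      one_div, one_div, Real.inv_rpow (hc1 n).le, Real.inv_rpow (hc2 n).le,
      ← Real.rpow_neg (hc1 n).le, ← Real.rpow_neg (hc2 n).le]
    ring
  have hFnonneg : ∀ n, ∀ x ∈ Set.Ioi (0:ℝ), 0 ≤ F n x := by
    intro n x hx
    have hx0 : (0:ℝ) < x := hx
    have he : Real.exp (-(c2 n * x)) ≤ Real.exp (-(c1 n * x)) := by
      apply Real.exp_le_exp.mpr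
      have := hc12 n
      nlinarith
    have hxp : (0:ℝ) ≤ x ^ (μ - 1) := Real.rpow_nonneg hx0.le _
    rw [hFdef]
    have := mul_le_mul_of_nonneg_left he hxp
    simpa [sub_nonneg] using this
  have hFnorm : ∀ n, ∫ x in Set.Ioi (0:ℝ), ‖F n x‖ = ∫ x in Set.Ioi (0:ℝ), F n x := by
    intro n
    refine setIntegral_congr_fun measurableSet_Ioi (fun x hx => ?_)
    exact Real.norm_of_nonneg (hFnonneg n x hx)
  -- summability of the core series
  have hsum : Summable (fun n => (c1 n) ^ (-μ) - (c2 n) ^ (-μ)) := by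
    have hbound : Summable (fun n : ℕ => μ * (2 * a) * (c1 n) ^ (-(μ + 1))) := by
      apply Summable.mul_left
      have hps : Summable (fun n : ℕ => ((n : ℝ) + (b - a) / (2 * b)) ^ (-(μ + 1))) := by
        have := (Real.summable_one_div_nat_add_rpow ((b - a) / (2 * b)) (μ + 1)).mpr
          (by linarith)
        refine this.congr (fun n => ?_)
        have hpos : (0:ℝ) < (n : ℝ) + (b - a) / (2 * b) := by
          have h1 : (0:ℝ) < (b - a) / (2 * b) := div_pos (by linarith) (by linarith)
          have : (0:ℝ) ≤ (n:ℝ) := Nat.cast_nonneg n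
          linarith
        rw [abs_of_pos hpos, Real.rpow_neg hpos.le, one_div]
      have := hps.mul_left ((2 * b) ^ (-(μ + 1)))
      refine this.congr (fun n => ?_)
      have hpos : (0:ℝ) < (n : ℝ) + (b - a) / (2 * b) := by
        have h1 : (0:ℝ) < (b - a) / (2 * b) := div_pos (by linarith) (by linarith)
        have : (0:ℝ) ≤ (n:ℝ) := Nat.cast_nonneg n
        linarith
      rw [← Real.mul_rpow (by positivity) hpos.le]
      congr 1
      simp only [hc1def]
      field_simp
    refine Summable.of_nonneg_of_le (fun n => ?_) (fun n => ?_) hbound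
    · have := Real.rpow_le_rpow_of_nonpos (hc1 n) (hc12 n) (by linarith : -μ ≤ 0)
      linarith
    · have hk := key_ineq (hc1 n) (hc12 n) hμ
      have h2 : c2 n - c1 n = 2 * a := by simp only [hc1def, hc2def]; ring
      rw [h2] at hk
      calc (c1 n) ^ (-μ) - (c2 n) ^ (-μ) ≤ μ * (c1 n) ^ (-(μ + 1)) * (2 * a) := hk
        _ = μ * (2 * a) * (c1 n) ^ (-(μ + 1)) := by ring
  -- relation between the stated series and the core series
  have hrel : ∀ n : ℕ,
      ((n : ℝ) + (b - a) / (2 * b)) ^ (-μ) - ((n : ℝ) + (b + a) / (2 * b)) ^ (-μ) =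
        (2 * b) ^ μ * ((c1 n) ^ (-μ) - (c2 n) ^ (-μ)) := by
    intro n
    have e1 : c1 n = 2 * b * ((n : ℝ) + (b - a) / (2 * b)) := by
      simp only [hc1def]; field_simp
    have e2 : c2 n = 2 * b * ((n : ℝ) + (b + a) / (2 * b)) := by
      simp only [hc2def]; field_simp
    have hp1 : (0:ℝ) < (n : ℝ) + (b - a) / (2 * b) := by
      have : (0:ℝ) ≤ (n:ℝ) := Nat.cast_nonneg n
      have h1 : (0:ℝ) < (b - a) / (2 * b) := div_pos (by linarith) (by linarith)
      linarith
    have hp2 : (0:ℝ) < (n : ℝ) + (b + a) / (2 * b) := by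
      have : (0:ℝ) ≤ (n:ℝ) := Nat.cast_nonneg n
      have h1 : (0:ℝ) < (b + a) / (2 * b) := by positivity
      linarith
    have hinv : (2 * b) ^ μ * (2 * b) ^ (-μ) = 1 := by
      rw [← Real.rpow_add (by positivity)]; simp
    rw [e1, e2, Real.mul_rpow (by positivity) hp1.le, Real.mul_rpow (by positivity) hp2.le,
      mul_sub, ← mul_assoc, ← mul_assoc, hinv, one_mul, one_mul]
  constructor
  · simp only [hrel]
    exact hsum.mul_left _
  · have hS : Summable (fun n => ∫ x in Set.Ioi (0:ℝ), ‖F n x‖) := by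
      simp_rw [hFnorm, hFval]
      exact hsum.mul_left _
    have hkey := MeasureTheory.integral_tsum_of_summable_integral_norm hFint hS
    have hpt : ∀ x ∈ Set.Ioi (0:ℝ),
        ∑' n, F n x = x ^ (μ - 1) * (Real.sinh (a * x) / Real.sinh (b * x)) := by
      intro x hx
      have := (hasSum_term a b μ ha hab (show (0:ℝ) < x from hx)).tsum_eq
      simpa [hFdef, hc1def, hc2def] using this
    have hL : ∫ x in Set.Ioi (0:ℝ), x ^ (μ - 1) * (Real.sinh (a * x) / Real.sinh (b * x)) =
        Real.Gamma μ * ∑' n, ((c1 n) ^ (-μ) - (c2 n) ^ (-μ)) := by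
      rw [← setIntegral_congr_fun measurableSet_Ioi hpt, ← hkey]
      simp_rw [hFval]
      exact tsum_mul_left
    rw [hL]
    have hR : (∑' n : ℕ,
        (((n : ℝ) + (b - a) / (2 * b)) ^ (-μ) - ((n : ℝ) + (b + a) / (2 * b)) ^ (-μ))) =
        (2 * b) ^ μ * ∑' n, ((c1 n) ^ (-μ) - (c2 n) ^ (-μ)) := by
      simp only [hrel]
      exact tsum_mul_left
    rw [hR]
    have hne : ((2 * b) : ℝ) ^ μ ≠ 0 := (Real.rpow_pos_of_pos (by positivity) μ).ne'
    field_simp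
end

section
/- For all real a, b, μ with 0 ≤ a < b and μ > 0, the integral ∫₀^∞ x^{μ−1} · cosh(a x)/cosh(b x) dx equals (Γ(μ)/(4b)^μ) · ( Z(μ, (b−a)/(4b)) + Z(μ, (b+a)/(4b)) ), where Z(μ, q) := Σ_{n=0}^{∞} [ (n+q)^{−μ} − (n+q+1/2)^{−μ} ], these series being absolutely convergent. -/
open Real MeasureTheory

open Set
lemma aux_summable {q μ : ℝ} (hq : 0 < q) (hμ : 0 < μ) :
    Summable (fun n : ℕ => ((n : ℝ) + q) ^ (-μ) - ((n : ℝ) + q + 1 / 2) ^ (-μ)) := by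
  have hpos : ∀ n : ℕ, (0:ℝ) < (n : ℝ) + q := fun n => by positivity
  apply summable_of_sum_range_le (c := q ^ (-μ))
  · intro n
    have h := Real.rpow_le_rpow_of_nonpos (hpos n) (by linarith : (n:ℝ) + q ≤ (n:ℝ) + q + 1/2)
      (by linarith : -μ ≤ 0)
    linarith
  · intro n
    calc ∑ i ∈ Finset.range n, (((i : ℝ) + q) ^ (-μ) - ((i : ℝ) + q + 1 / 2) ^ (-μ))
        ≤ ∑ i ∈ Finset.range n, (((i : ℝ) + q) ^ (-μ) - (((i+1 : ℕ) : ℝ) + q) ^ (-μ)) := by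
          apply Finset.sum_le_sum
          intro i _
          have h := Real.rpow_le_rpow_of_nonpos (by positivity : (0:ℝ) < (i:ℝ) + q + 1/2)
            (by push_cast; linarith : (i:ℝ) + q + 1/2 ≤ ((i+1 : ℕ) : ℝ) + q) (by linarith : -μ ≤ 0)
          linarith
      _ = q ^ (-μ) - ((n : ℝ) + q) ^ (-μ) := by
          have := Finset.sum_range_sub' (fun i : ℕ => (((i : ℕ) : ℝ) + q) ^ (-μ)) n
          simpa using this
      _ ≤ q ^ (-μ) := by
          have : 0 ≤ ((n : ℝ) + q) ^ (-μ) := Real.rpow_nonneg (hpos n).le _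
          linarith

lemma aux_integrable {μ c : ℝ} (hμ : 0 < μ) (hc : 0 < c) :
    IntegrableOn (fun x : ℝ => x ^ (μ - 1) * Real.exp (-(c * x))) (Ioi 0) := by
  have := integrableOn_rpow_mul_exp_neg_mul_rpow (s := μ - 1) (p := 1) (b := c)
    (by linarith) one_pos hc
  simpa [Real.rpow_one, neg_mul] using this

lemma aux_integral {μ c : ℝ} (hμ : 0 < μ) (hc : 0 < c) :
    ∫ x in Ioi (0:ℝ), x ^ (μ - 1) * Real.exp (-(c * x)) = c ^ (-μ) * Real.Gamma μ := by
  rw [integral_rpow_mul_exp_neg_mul_Ioi hμ hc, one_div, Real.inv_rpow hc.le,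
    ← Real.rpow_neg hc.le]

noncomputable def Faux (b q1 q2 μ : ℝ) (n : ℕ) (x : ℝ) : ℝ :=
  x ^ (μ-1) * Real.exp (-(4*b*((n:ℝ)+q1) * x)) - x ^ (μ-1) * Real.exp (-(4*b*((n:ℝ)+q1+1/2) * x))
    + (x ^ (μ-1) * Real.exp (-(4*b*((n:ℝ)+q2) * x))
       - x ^ (μ-1) * Real.exp (-(4*b*((n:ℝ)+q2+1/2) * x)))

theorem stmt_14 (a b μ : ℝ) (ha : 0 ≤ a) (hab : a < b) (hμ : 0 < μ) :
    Summable (fun n : ℕ =>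
        ((n : ℝ) + (b - a) / (4 * b)) ^ (-μ) - ((n : ℝ) + (b - a) / (4 * b) + 1 / 2) ^ (-μ)) ∧
    Summable (fun n : ℕ =>
        ((n : ℝ) + (b + a) / (4 * b)) ^ (-μ) - ((n : ℝ) + (b + a) / (4 * b) + 1 / 2) ^ (-μ)) ∧
    ∫ x in Set.Ioi (0:ℝ), x ^ (μ - 1) * (Real.cosh (a * x) / Real.cosh (b * x)) =
      Real.Gamma μ / (4 * b) ^ μ *
        ((∑' n : ℕ,
            (((n : ℝ) + (b - a) / (4 * b)) ^ (-μ) -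
              ((n : ℝ) + (b - a) / (4 * b) + 1 / 2) ^ (-μ))) +
          ∑' n : ℕ,
            (((n : ℝ) + (b + a) / (4 * b)) ^ (-μ) -
              ((n : ℝ) + (b + a) / (4 * b) + 1 / 2) ^ (-μ))) := by
  have hb : 0 < b := lt_of_le_of_lt ha hab
  obtain ⟨q1, hq1def⟩ : ∃ q : ℝ, q = (b - a) / (4 * b) := ⟨_, rfl⟩
  obtain ⟨q2, hq2def⟩ : ∃ q : ℝ, q = (b + a) / (4 * b) := ⟨_, rfl⟩
  rw [← hq1def, ← hq2def]
  have hq1 : 0 < q1 := hq1def ▸ div_pos (by linarith) (by linarith)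
  have hq2 : 0 < q2 := hq2def ▸ div_pos (by linarith) (by linarith)
  have S1 := aux_summable hq1 hμ
  have S2 := aux_summable hq2 hμ
  refine ⟨S1, S2, ?_⟩
  have hc : ∀ (n : ℕ) (r : ℝ), 0 < r → 0 < 4 * b * ((n:ℝ) + r) := by
    intro n r hr
    have : (0:ℝ) ≤ n := n.cast_nonneg
    nlinarith
  have hFn : ∀ n x, Faux b q1 q2 μ n x =
      x ^ (μ-1) * Real.exp (-(4*b*((n:ℝ)+q1) * x)) - x ^ (μ-1) * Real.exp (-(4*b*((n:ℝ)+q1+1/2) * x))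
      + (x ^ (μ-1) * Real.exp (-(4*b*((n:ℝ)+q2) * x))
         - x ^ (μ-1) * Real.exp (-(4*b*((n:ℝ)+q2+1/2) * x))) := fun n x => rfl
  have hq1' : (0:ℝ) < q1 + 1/2 := by linarith
  have hq2' : (0:ℝ) < q2 + 1/2 := by linarith
  have hp1 : ∀ n : ℕ, (0:ℝ) < 4*b*((n:ℝ)+q1) := fun n => hc n _ hq1
  have hp2 : ∀ n : ℕ, (0:ℝ) < 4*b*((n:ℝ)+q1+1/2) := fun n => by
    have := hc n (q1+1/2) hq1'; linarith
  have hp3 : ∀ n : ℕ, (0:ℝ) < 4*b*((n:ℝ)+q2) := fun n => hc n _ hq2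
  have hp4 : ∀ n : ℕ, (0:ℝ) < 4*b*((n:ℝ)+q2+1/2) := fun n => by
    have := hc n (q2+1/2) hq2'; linarith
  have hInt : ∀ n, IntegrableOn (Faux b q1 q2 μ n) (Ioi 0) := by
    intro n
    have : Faux b q1 q2 μ n = fun x =>
        (fun x : ℝ => x ^ (μ-1) * Real.exp (-(4*b*((n:ℝ)+q1) * x))) x
          - (fun x : ℝ => x ^ (μ-1) * Real.exp (-(4*b*((n:ℝ)+q1+1/2) * x))) x
        + ((fun x : ℝ => x ^ (μ-1) * Real.exp (-(4*b*((n:ℝ)+q2) * x))) x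
          - (fun x : ℝ => x ^ (μ-1) * Real.exp (-(4*b*((n:ℝ)+q2+1/2) * x))) x) := rfl
    rw [this]
    exact ((aux_integrable hμ (hp1 n)).sub (aux_integrable hμ (hp2 n))).add
      ((aux_integrable hμ (hp3 n)).sub (aux_integrable hμ (hp4 n)))
  have hval : ∀ n : ℕ, ∫ x in Ioi (0:ℝ), Faux b q1 q2 μ n x =
      Real.Gamma μ / (4*b) ^ μ *
        ((((n:ℝ)+q1) ^ (-μ) - ((n:ℝ)+q1+1/2) ^ (-μ)) +
         (((n:ℝ)+q2) ^ (-μ) - ((n:ℝ)+q2+1/2) ^ (-μ))) := by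
    intro n
    have h4b : (0:ℝ) ≤ 4 * b := by linarith
    simp only [hFn]
    have i1 : Integrable (fun x : ℝ => x ^ (μ-1) * Real.exp (-(4*b*((n:ℝ)+q1) * x)))
        (volume.restrict (Ioi 0)) := aux_integrable hμ (hp1 n)
    have i2 : Integrable (fun x : ℝ => x ^ (μ-1) * Real.exp (-(4*b*((n:ℝ)+q1+1/2) * x)))
        (volume.restrict (Ioi 0)) := aux_integrable hμ (hp2 n)
    have i3 : Integrable (fun x : ℝ => x ^ (μ-1) * Real.exp (-(4*b*((n:ℝ)+q2) * x)))
        (volume.restrict (Ioi 0)) := aux_integrable hμ (hp3 n)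
    have i4 : Integrable (fun x : ℝ => x ^ (μ-1) * Real.exp (-(4*b*((n:ℝ)+q2+1/2) * x)))
        (volume.restrict (Ioi 0)) := aux_integrable hμ (hp4 n)
    have i12 : Integrable (fun x : ℝ => x ^ (μ-1) * Real.exp (-(4*b*((n:ℝ)+q1) * x))
        - x ^ (μ-1) * Real.exp (-(4*b*((n:ℝ)+q1+1/2) * x))) (volume.restrict (Ioi 0)) := i1.sub i2
    have i34 : Integrable (fun x : ℝ => x ^ (μ-1) * Real.exp (-(4*b*((n:ℝ)+q2) * x))
        - x ^ (μ-1) * Real.exp (-(4*b*((n:ℝ)+q2+1/2) * x))) (volume.restrict (Ioi 0)) := i3.sub i4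
    rw [integral_add i12 i34, integral_sub i1 i2, integral_sub i3 i4,
      aux_integral hμ (hp1 n), aux_integral hμ (hp2 n),
      aux_integral hμ (hp3 n), aux_integral hμ (hp4 n)]
    rw [Real.mul_rpow h4b (by positivity), Real.mul_rpow h4b (by positivity),
      Real.mul_rpow h4b (by positivity), Real.mul_rpow h4b (by positivity),
      Real.rpow_neg h4b]
    ring
  have hnonneg : ∀ n : ℕ, ∀ x ∈ Ioi (0:ℝ), 0 ≤ Faux b q1 q2 μ n x := by
    intro n x hx
    have hx0 : (0:ℝ) < x := hx
    have key : ∀ r : ℝ, 0 < r →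
        0 ≤ x ^ (μ-1) * Real.exp (-(4*b*((n:ℝ)+r) * x))
          - x ^ (μ-1) * Real.exp (-(4*b*((n:ℝ)+r+1/2) * x)) := by
      intro r hr
      have hle : Real.exp (-(4*b*((n:ℝ)+r+1/2) * x)) ≤ Real.exp (-(4*b*((n:ℝ)+r) * x)) := by
        apply Real.exp_le_exp.2
        nlinarith
      have hxn : (0:ℝ) ≤ x ^ (μ-1) := Real.rpow_nonneg hx0.le _
      nlinarith
    have h1 := key q1 hq1
    have h2 := key q2 hq2
    rw [hFn]
    linarith
  have hnorm : ∀ n : ℕ, ∫ x in Ioi (0:ℝ), ‖Faux b q1 q2 μ n x‖ = ∫ x in Ioi (0:ℝ), Faux b q1 q2 μ n x := by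
    intro n
    exact setIntegral_congr_fun measurableSet_Ioi fun x hx => Real.norm_of_nonneg (hnonneg n x hx)
  have hsum : Summable (fun n : ℕ => ∫ x in Ioi (0:ℝ), ‖Faux b q1 q2 μ n x‖) := by
    apply Summable.congr ((S1.add S2).mul_left (Real.Gamma μ / (4*b) ^ μ))
    intro n
    rw [hnorm n, hval n]
  have hswap := MeasureTheory.integral_tsum_of_summable_integral_norm
    (μ := volume.restrict (Ioi (0:ℝ))) hInt hsum
  have hpt : ∀ x ∈ Ioi (0:ℝ), ∑' n : ℕ, Faux b q1 q2 μ n x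
      = x ^ (μ - 1) * (Real.cosh (a * x) / Real.cosh (b * x)) := by
    intro x hx
    have hx0 : (0:ℝ) < x := hx
    have hr0 : (0:ℝ) ≤ Real.exp (-(4*b*x)) := (Real.exp_pos _).le
    have hr1 : Real.exp (-(4*b*x)) < 1 := Real.exp_lt_one_iff.2 (by nlinarith)
    have key : ∀ n : ℕ, Faux b q1 q2 μ n x =
        (x ^ (μ-1) * ((Real.exp (-((b-a)*x)) + Real.exp (-((b+a)*x)))
          * (1 - Real.exp (-(2*b*x))))) * (Real.exp (-(4*b*x))) ^ n := by
      intro n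
      have e1 : Real.exp (-(4*b*((n:ℝ)+q1) * x))
          = Real.exp (-((b-a)*x)) * (Real.exp (-(4*b*x))) ^ n := by
        rw [← Real.exp_nat_mul, ← Real.exp_add]
        congr 1
        rw [hq1def]; field_simp
        ring
      have e2 : Real.exp (-(4*b*((n:ℝ)+q1+1/2) * x))
          = Real.exp (-((b-a)*x)) * Real.exp (-(2*b*x)) * (Real.exp (-(4*b*x))) ^ n := by
        rw [← Real.exp_nat_mul, ← Real.exp_add, ← Real.exp_add]
        congr 1
        rw [hq1def]; field_simp
        ring
      have e3 : Real.exp (-(4*b*((n:ℝ)+q2) * x))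
          = Real.exp (-((b+a)*x)) * (Real.exp (-(4*b*x))) ^ n := by
        rw [← Real.exp_nat_mul, ← Real.exp_add]
        congr 1
        rw [hq2def]; field_simp
        ring
      have e4 : Real.exp (-(4*b*((n:ℝ)+q2+1/2) * x))
          = Real.exp (-((b+a)*x)) * Real.exp (-(2*b*x)) * (Real.exp (-(4*b*x))) ^ n := by
        rw [← Real.exp_nat_mul, ← Real.exp_add, ← Real.exp_add]
        congr 1
        rw [hq2def]; field_simp
        ring
      rw [hFn, e1, e2, e3, e4]
      ring
    rw [tsum_congr key, tsum_mul_left, tsum_geometric_of_lt_one hr0 hr1]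
    -- now a pure exp identity
    have h2 : Real.exp (-(2*b*x)) = Real.exp (-(b*x)) ^ 2 := by
      rw [← Real.exp_nat_mul]; congr 1; push_cast; ring
    have h4 : Real.exp (-(4*b*x)) = Real.exp (-(b*x)) ^ 4 := by
      rw [← Real.exp_nat_mul]; congr 1; push_cast; ring
    have hba : Real.exp (-((b-a)*x)) = Real.exp (-(b*x)) * Real.exp (a*x) := by
      rw [← Real.exp_add]; congr 1; ring
    have hba' : Real.exp (-((b+a)*x)) = Real.exp (-(b*x)) * Real.exp (-(a*x)) := by
      rw [← Real.exp_add]; congr 1; ring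
    have hbinv : Real.exp (b*x) = (Real.exp (-(b*x)))⁻¹ := by
      rw [Real.exp_neg, inv_inv]
    have hainv : Real.exp (-(a*x)) = (Real.exp (a*x))⁻¹ := Real.exp_neg _
    rw [Real.cosh_eq, Real.cosh_eq, h2, h4, hba, hba', hbinv, hainv]
    set u := Real.exp (-(b*x)) with hu
    set w := Real.exp (a*x) with hw
    have hu0 : 0 < u := Real.exp_pos _
    have hu1 : u < 1 := Real.exp_lt_one_iff.2 (by nlinarith)
    have hw0 : 0 < w := Real.exp_pos _
    have hden : (0:ℝ) < 1 - u ^ 4 := by nlinarith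
    have hden2 : (0:ℝ) < u⁻¹ + u := by positivity
    field_simp
    ring
  calc ∫ x in Ioi (0:ℝ), x ^ (μ - 1) * (Real.cosh (a * x) / Real.cosh (b * x))
      = ∫ x in Ioi (0:ℝ), ∑' n : ℕ, Faux b q1 q2 μ n x :=
        setIntegral_congr_fun (μ := volume) measurableSet_Ioi fun x hx => (hpt x hx).symm
    _ = ∑' n : ℕ, ∫ x in Ioi (0:ℝ), Faux b q1 q2 μ n x := hswap.symm
    _ = ∑' n : ℕ, (Real.Gamma μ / (4*b) ^ μ *
        ((((n:ℝ)+q1) ^ (-μ) - ((n:ℝ)+q1+1/2) ^ (-μ)) +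
         (((n:ℝ)+q2) ^ (-μ) - ((n:ℝ)+q2+1/2) ^ (-μ)))) := tsum_congr hval
    _ = Real.Gamma μ / (4*b) ^ μ *
        ((∑' n : ℕ, (((n:ℝ)+q1) ^ (-μ) - ((n:ℝ)+q1+1/2) ^ (-μ))) +
         ∑' n : ℕ, (((n:ℝ)+q2) ^ (-μ) - ((n:ℝ)+q2+1/2) ^ (-μ))) := by
        rw [tsum_mul_left, Summable.tsum_add S1 S2]
end
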